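/- arXiv:2303.02832 — 5 statements merged into one kernel-verified Lean document; each statement's English description precedes it below -/
import Mathlib

section
/- For each integer j ≥ 2 there exists a real constant γ_j and a constant C > 0 such that for all sufficiently large natural numbers n, | l_j(n) − ln_j(n) − γ_j − 1/(2·n·ln n·ln_2 n⋯ln_{j−1} n) | ≤ C/(n²·ln n·ln_2 n⋯ln_{j−1} n). In particular l_j(n) − ln_j(n) converges to γ_j as n → ∞. -/
open Filter Finset

/-- The `j`-th iterated natural logarithm: `ln_j(x) = ln(ln(⋯ln(x)⋯))` (`j` times). -/
noncomputable def lnIter (j : ℕ) (x : ℝ) : ℝ := Real.log^[j] x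

/-- The denominator `x · ln x · ln_2 x ⋯ ln_{j-1} x`. -/
noncomputable def denomL (j : ℕ) (x : ℝ) : ℝ := x * ∏ i ∈ Finset.Icc 1 (j - 1), lnIter i x

/-- Hyperpowers of `e`: `⁰e = 1`, `^{i+1}e = e^(^{i}e)`. -/
noncomputable def hyperE : ℕ → ℝ
  | 0 => 1
  | i + 1 => Real.exp (hyperE i)

/-- The lower summation limit `a(j)`: `a(2) = 2` and `a(j) = ⌈^{j-2}e⌉` for `j ≥ 3`. -/
noncomputable def lowerA (j : ℕ) : ℕ := if j = 2 then 2 else ⌈hyperE (j - 2)⌉₊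

/-- `l_j(n) = ∑_{k=a(j)}^{n} 1/(k·ln k·ln_2 k⋯ln_{j-1} k)`. -/
noncomputable def lSum (j n : ℕ) : ℝ := ∑ k ∈ Finset.Icc (lowerA j) n, 1 / denomL j (k : ℝ)

/-- `denomH j k = k · h_1(k) · h_2(k) ⋯ h_j(k)`, the denominator appearing in `h_{j+1}`. -/
def denomH : ℕ → ℕ → ℚ
  | 0, k => (k : ℚ)
  | j + 1, k => denomH j k * ∑ m ∈ Finset.Icc 1 k, 1 / denomH j m

/-- The `j`-th iterated harmonic number (`j ≥ 1`):
`h_1(n) = ∑_{k=1}^n 1/k` and `h_j(n) = ∑_{k=1}^{n} 1/(k·h_1(k)⋯h_{j-1}(k))`. -/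
def hIter (j n : ℕ) : ℚ := ∑ k ∈ Finset.Icc 1 n, 1 / denomH (j - 1) k


section IterAux
open intervalIntegral

lemma lnIter_succ (i : ℕ) (x : ℝ) : lnIter (i+1) x = lnIter i (Real.log x) := by
  simp [lnIter, Function.iterate_succ_apply]

lemma one_le_hyperE (i : ℕ) : 1 ≤ hyperE i := by
  induction i with
  | zero => simp [hyperE]
  | succ n ih =>
    have := Real.add_one_le_exp (hyperE n)
    simp only [hyperE]
    linarith

lemma hyperE_mono : Monotone hyperE := by
  apply monotone_nat_of_le_succ
  intro n
  have := Real.add_one_le_exp (hyperE n)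
  simp only [hyperE]; linarith

lemma one_le_lnIter (i : ℕ) {x : ℝ} (hx : hyperE i ≤ x) : 1 ≤ lnIter i x := by
  induction i generalizing x with
  | zero => simpa [lnIter, hyperE] using hx
  | succ n ih =>
    rw [lnIter_succ]
    apply ih
    have h1 : (0:ℝ) < hyperE (n+1) := lt_of_lt_of_le one_pos (one_le_hyperE _)
    calc hyperE n = Real.log (hyperE (n+1)) := by simp [hyperE]
    _ ≤ Real.log x := Real.log_le_log (by positivity) hx

lemma lnIter_le_lnIter (i : ℕ) {x y : ℝ} (hx : hyperE i ≤ x) (hxy : x ≤ y) :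
    lnIter i x ≤ lnIter i y := by
  induction i generalizing x y with
  | zero => simpa [lnIter]
  | succ n ih =>
    rw [lnIter_succ, lnIter_succ]
    have h1 : (0:ℝ) < hyperE (n+1) := lt_of_lt_of_le one_pos (one_le_hyperE _)
    have hx0 : 0 < x := lt_of_lt_of_le h1 hx
    apply ih
    · calc hyperE n = Real.log (hyperE (n+1)) := by simp [hyperE]
      _ ≤ Real.log x := Real.log_le_log h1 hx
    · exact Real.log_le_log hx0 hxy

noncomputable def Pfun (j : ℕ) (x : ℝ) : ℝ := ∏ i ∈ Finset.range j, lnIter i x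
noncomputable def gfun (j : ℕ) (x : ℝ) : ℝ := ∑ i ∈ Finset.range j, (Pfun (i+1) x)⁻¹

lemma one_le_Pfun (m : ℕ) {x : ℝ} (hx : hyperE m ≤ x) : 1 ≤ Pfun m x := by
  rw [Pfun]
  calc (1:ℝ) = ∏ _i ∈ Finset.range m, 1 := by simp
  _ ≤ _ := Finset.prod_le_prod (by intros; exact zero_le_one)
      (fun i hi => one_le_lnIter i (le_trans (hyperE_mono (Finset.mem_range.mp hi).le) hx))

lemma Pfun_pos (m : ℕ) {x : ℝ} (hx : hyperE m ≤ x) : 0 < Pfun m x :=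
  lt_of_lt_of_le one_pos (one_le_Pfun m hx)

lemma le_Pfun (m : ℕ) (hm : 1 ≤ m) {x : ℝ} (hx : hyperE m ≤ x) : x ≤ Pfun m x := by
  obtain ⟨n, rfl⟩ : ∃ n, m = n + 1 := ⟨m - 1, by omega⟩
  rw [Pfun, Finset.prod_range_succ']
  have h0 : lnIter 0 x = x := rfl
  rw [h0]
  have h1 : (1:ℝ) ≤ ∏ i ∈ Finset.range n, lnIter (i+1) x := by
    calc (1:ℝ) = ∏ _i ∈ Finset.range n, 1 := by simp
    _ ≤ _ := Finset.prod_le_prod (by intros; exact zero_le_one)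
        (fun i hi => one_le_lnIter _
          (le_trans (hyperE_mono (Nat.le_succ_of_le (Nat.succ_le_of_lt (Finset.mem_range.mp hi)))) hx))
  have hx0 : 0 ≤ x := le_trans (le_trans zero_le_one (one_le_hyperE _)) hx
  nlinarith

lemma Pfun_mono (m : ℕ) {x y : ℝ} (hx : hyperE m ≤ x) (hxy : x ≤ y) :
    Pfun m x ≤ Pfun m y := by
  apply Finset.prod_le_prod
  · intro i hi
    exact le_trans zero_le_one
      (one_le_lnIter i (le_trans (hyperE_mono (Finset.mem_range.mp hi).le) hx))
  · intro i hi
    exact lnIter_le_lnIter i (le_trans (hyperE_mono (Finset.mem_range.mp hi).le) hx) hxy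

lemma gfun_pos (m : ℕ) (hm : 1 ≤ m) {x : ℝ} (hx : hyperE m ≤ x) : 0 < gfun m x := by
  apply Finset.sum_pos
  · intro i hi
    have : hyperE (i+1) ≤ x :=
      le_trans (hyperE_mono (Nat.succ_le_of_lt (Finset.mem_range.mp hi))) hx
    exact inv_pos.mpr (Pfun_pos _ this)
  · exact Finset.nonempty_range_iff.mpr (by omega)

lemma gfun_anti (m : ℕ) {x y : ℝ} (hx : hyperE m ≤ x) (hxy : x ≤ y) :
    gfun m y ≤ gfun m x := by
  apply Finset.sum_le_sum
  intro i hi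
  have him : i + 1 ≤ m := Finset.mem_range.mp hi
  have hx' : hyperE (i+1) ≤ x := le_trans (hyperE_mono him) hx
  exact inv_anti₀ (Pfun_pos _ hx') (Pfun_mono _ hx' hxy)

lemma gfun_le (m : ℕ) {x : ℝ} (hx : hyperE m ≤ x) : gfun m x ≤ m / x := by
  have hx1 : (1:ℝ) ≤ x := le_trans (one_le_hyperE _) hx
  have hx0 : (0:ℝ) < x := lt_of_lt_of_le one_pos hx1
  calc gfun m x ≤ ∑ _i ∈ Finset.range m, x⁻¹ := by
        apply Finset.sum_le_sum
        intro i hi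
        have him : i + 1 ≤ m := Finset.mem_range.mp hi
        have hx' : hyperE (i+1) ≤ x := le_trans (hyperE_mono him) hx
        exact inv_anti₀ hx0 (le_trans (le_Pfun _ (by omega) hx') (le_refl _))
    _ = m / x := by simp [Finset.sum_const, div_eq_mul_inv]

lemma hasDerivAt_lnIter (m : ℕ) {x : ℝ} (hx : hyperE m ≤ x) :
    HasDerivAt (lnIter m) ((Pfun m x)⁻¹) x := by
  induction m generalizing x with
  | zero =>
    rw [show (Pfun 0 x)⁻¹ = 1 by simp [Pfun]]; exact hasDerivAt_id x
  | succ n ih =>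
    have hx0 : 0 < x := lt_of_lt_of_le (lt_of_lt_of_le one_pos (one_le_hyperE _)) hx
    have hlog : hyperE n ≤ Real.log x := by
      calc hyperE n = Real.log (hyperE (n+1)) := by simp [hyperE]
      _ ≤ Real.log x := Real.log_le_log (lt_of_lt_of_le one_pos (one_le_hyperE _)) hx
    have h1 := (ih hlog).comp x (Real.hasDerivAt_log (ne_of_gt hx0))
    have heq : (lnIter n ∘ Real.log) = lnIter (n+1) := by
      funext y; rw [Function.comp_apply, lnIter_succ]
    rw [heq] at h1
    have hP : Pfun (n+1) x = Pfun n (Real.log x) * x := by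
      rw [Pfun, Finset.prod_range_succ']
      have h0 : lnIter 0 x = x := rfl
      rw [h0, Pfun]
      congr 1
    rw [hP, mul_inv]
    exact h1

lemma hasDerivAt_Pfun (m : ℕ) {x : ℝ} (hx : hyperE m ≤ x) :
    HasDerivAt (Pfun m) (Pfun m x * gfun m x) x := by
  induction m generalizing x with
  | zero =>
    have : Pfun 0 = fun _ : ℝ => (1:ℝ) := by funext y; simp [Pfun]
    rw [this]
    simpa [Pfun, gfun] using hasDerivAt_const x (1:ℝ)
  | succ n ih =>
    have hx' : hyperE n ≤ x := le_trans (hyperE_mono (Nat.le_succ n)) hx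
    have h1 := (ih hx').mul (hasDerivAt_lnIter n hx')
    have heq : (Pfun n * lnIter n) = Pfun (n+1) := by
      funext y; rw [Pi.mul_apply, Pfun, Pfun, Finset.prod_range_succ]
    rw [heq] at h1
    refine h1.congr_deriv ?_
    have hP : Pfun (n+1) x = Pfun n x * lnIter n x := by
      rw [Pfun, Pfun, Finset.prod_range_succ]
    have hg : gfun (n+1) x = gfun n x + (Pfun (n+1) x)⁻¹ := by
      rw [gfun, gfun, Finset.sum_range_succ]
    have hPn : Pfun n x ≠ 0 := ne_of_gt (Pfun_pos n hx')
    have hPsn : Pfun (n+1) x ≠ 0 := ne_of_gt (Pfun_pos (n+1) hx)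
    have hL : lnIter n x ≠ 0 :=
      ne_of_gt (lt_of_lt_of_le one_pos (one_le_lnIter n hx'))
    rw [hg, hP]
    field_simp

lemma hasDerivAt_inv_Pfun (m : ℕ) {x : ℝ} (hx : hyperE m ≤ x) :
    HasDerivAt (fun y => (Pfun m y)⁻¹) (-(gfun m x / Pfun m x)) x := by
  have hP : Pfun m x ≠ 0 := ne_of_gt (Pfun_pos m hx)
  have h := (hasDerivAt_Pfun m hx).inv hP
  refine h.congr_deriv ?_
  field_simp

lemma gfun_nonneg (m : ℕ) {x : ℝ} (hx : hyperE m ≤ x) : 0 ≤ gfun m x := by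
  apply Finset.sum_nonneg
  intro i hi
  have : hyperE (i+1) ≤ x :=
    le_trans (hyperE_mono (Nat.succ_le_of_lt (Finset.mem_range.mp hi))) hx
  exact le_of_lt (inv_pos.mpr (Pfun_pos _ this))

lemma fd_mono (m : ℕ) {x y : ℝ} (hx : hyperE m ≤ x) (hxy : x ≤ y) :
    -(gfun m x / Pfun m x) ≤ -(gfun m y / Pfun m y) := by
  have hy : hyperE m ≤ y := le_trans hx hxy
  apply neg_le_neg
  exact div_le_div₀ (gfun_nonneg m hx) (gfun_anti m hx hxy) (Pfun_pos m hx)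
    (Pfun_mono m hx hxy)

lemma f_anti (m : ℕ) {x y : ℝ} (hx : hyperE m ≤ x) (hxy : x ≤ y) :
    (Pfun m y)⁻¹ ≤ (Pfun m x)⁻¹ :=
  inv_anti₀ (Pfun_pos m hx) (Pfun_mono m hx hxy)

lemma f_convex (m : ℕ) : ConvexOn ℝ (Set.Ici (hyperE m)) (fun y => (Pfun m y)⁻¹) := by
  apply MonotoneOn.convexOn_of_deriv (convex_Ici _)
  · intro x hx
    exact ((hasDerivAt_inv_Pfun m hx).continuousAt).continuousWithinAt
  · rw [interior_Ici]
    intro x hx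
    exact ((hasDerivAt_inv_Pfun m (le_of_lt hx)).differentiableAt).differentiableWithinAt
  · rw [interior_Ici]
    intro x hx y hy hxy
    rw [(hasDerivAt_inv_Pfun m (le_of_lt hx)).deriv,
        (hasDerivAt_inv_Pfun m (le_of_lt hy)).deriv]
    exact fd_mono m (le_of_lt hx) hxy

lemma fi_integrable (m : ℕ) {a b : ℝ} (ha : hyperE m ≤ a) (hab : a ≤ b) :
    IntervalIntegrable (fun y => (Pfun m y)⁻¹) MeasureTheory.volume a b := by
  apply ContinuousOn.intervalIntegrable
  intro x hx
  rw [Set.uIcc_of_le hab] at hx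
  exact ((hasDerivAt_inv_Pfun m (le_trans ha hx.1)).continuousAt).continuousWithinAt

lemma integral_f (m : ℕ) {a b : ℝ} (ha : hyperE m ≤ a) (hab : a ≤ b) :
    ∫ x in a..b, (Pfun m x)⁻¹ = lnIter m b - lnIter m a := by
  apply intervalIntegral.integral_eq_sub_of_hasDerivAt
  · intro x hx
    rw [Set.uIcc_of_le hab] at hx
    exact hasDerivAt_lnIter m (le_trans ha hx.1)
  · exact fi_integrable m ha hab

lemma integral_affine (c0 c1 a b : ℝ) :
    ∫ x in a..b, (c0 + c1 * x) = c0 * (b - a) + c1 * ((b ^ 2 - a ^ 2) / 2) := by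
  have h1 : IntervalIntegrable (fun x : ℝ => c1 * x) MeasureTheory.volume a b := by
    apply Continuous.intervalIntegrable; continuity
  rw [intervalIntegral.integral_add intervalIntegrable_const h1,
    intervalIntegral.integral_const_mul, integral_id, intervalIntegral.integral_const]
  simp only [smul_eq_mul]
  ring

lemma affine_integrable (c0 c1 : ℝ) (a b : ℝ) :
    IntervalIntegrable (fun x => c0 + c1 * x) MeasureTheory.volume a b := by
  apply Continuous.intervalIntegrable; continuity

lemma trapezoid_le (m : ℕ) {a : ℝ} (ha : hyperE m ≤ a) :
    lnIter m (a+1) - lnIter m a ≤ ((Pfun m a)⁻¹ + (Pfun m (a+1))⁻¹) / 2 := by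
  have h01 : a ≤ a + 1 := by linarith
  have ha1 : hyperE m ≤ a + 1 := by linarith
  set fa := (Pfun m a)⁻¹ with hfa
  set fb := (Pfun m (a+1))⁻¹ with hfb
  set c1 := fb - fa with hc1
  set c0 := fa - c1 * a with hc0
  rw [← integral_f m ha h01]
  have hle : ∀ x ∈ Set.Icc a (a+1), (Pfun m x)⁻¹ ≤ c0 + c1 * x := by
    intro x hx
    have ht0 : 0 ≤ x - a := by linarith [hx.1]
    have ht1 : 0 ≤ (a + 1) - x := by linarith [hx.2]
    have key := (f_convex m).2 (Set.mem_Ici.mpr ha) (Set.mem_Ici.mpr ha1)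
      ht1 ht0 (by ring)
    have hpt : ((a+1) - x) • a + (x - a) • (a+1) = x := by
      simp only [smul_eq_mul]; ring
    rw [hpt] at key
    simp only [smul_eq_mul] at key
    calc (Pfun m x)⁻¹ ≤ ((a+1) - x) * fa + (x - a) * fb := key
    _ = c0 + c1 * x := by rw [hc0, hc1]; ring
  calc (∫ x in a..a+1, (Pfun m x)⁻¹)
      ≤ ∫ x in a..a+1, (c0 + c1 * x) :=
        intervalIntegral.integral_mono_on h01 (fi_integrable m ha h01)
          (affine_integrable c0 c1 a (a+1)) hle
    _ = c0 * ((a+1) - a) + c1 * (((a+1) ^ 2 - a ^ 2) / 2) := integral_affine c0 c1 a (a+1)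
    _ = (fa + fb) / 2 := by rw [hc0, hc1]; ring

lemma tangent_le_right (m : ℕ) {a x : ℝ} (ha : hyperE m ≤ a) (hax : a ≤ x) :
    (Pfun m a)⁻¹ + (-(gfun m a / Pfun m a)) * (x - a) ≤ (Pfun m x)⁻¹ := by
  rcases eq_or_lt_of_le hax with rfl | h
  · simp
  · have hx : hyperE m ≤ x := le_trans ha (le_of_lt h)
    have hs := (f_convex m).le_slope_of_hasDerivAt (Set.mem_Ici.mpr ha)
      (Set.mem_Ici.mpr hx) h (hasDerivAt_inv_Pfun m ha)
    rw [slope_def_field] at hs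
    have hxa : 0 < x - a := by linarith
    rw [le_div_iff₀ hxa] at hs
    linarith

lemma tangent_le_left (m : ℕ) {b x : ℝ} (hx : hyperE m ≤ x) (hxb : x ≤ b) :
    (Pfun m b)⁻¹ + (-(gfun m b / Pfun m b)) * (x - b) ≤ (Pfun m x)⁻¹ := by
  rcases eq_or_lt_of_le hxb with rfl | h
  · simp
  · have hb : hyperE m ≤ b := le_trans hx hxb
    have hs := (f_convex m).slope_le_of_hasDerivAt (Set.mem_Ici.mpr hx)
      (Set.mem_Ici.mpr hb) h (hasDerivAt_inv_Pfun m hb)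
    rw [slope_def_field] at hs
    have hbx : 0 < b - x := by linarith
    rw [div_le_iff₀ hbx] at hs
    nlinarith [hs]

lemma trapezoid_ge (m : ℕ) {a : ℝ} (ha : hyperE m ≤ a) :
    ((Pfun m a)⁻¹ + (Pfun m (a+1))⁻¹) / 2 - (lnIter m (a+1) - lnIter m a) ≤
      (-(gfun m (a+1) / Pfun m (a+1)) - -(gfun m a / Pfun m a)) / 8 := by
  have hmid : hyperE m ≤ a + 1/2 := by linarith
  have h1 : a ≤ a + 1/2 := by linarith
  have h2 : a + 1/2 ≤ a + 1 := by linarith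
  set fa := (Pfun m a)⁻¹ with hfa
  set fb := (Pfun m (a+1))⁻¹ with hfb
  set da := -(gfun m a / Pfun m a) with hda
  set db := -(gfun m (a+1) / Pfun m (a+1)) with hdb
  have hsplit : (∫ x in a..(a+1/2), (Pfun m x)⁻¹) + (∫ x in (a+1/2)..(a+1), (Pfun m x)⁻¹)
      = ∫ x in a..(a+1), (Pfun m x)⁻¹ :=
    intervalIntegral.integral_add_adjacent_intervals
      (fi_integrable m ha h1) (fi_integrable m hmid h2)
  have hp1 : fa / 2 + da / 8 ≤ ∫ x in a..(a+1/2), (Pfun m x)⁻¹ := by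
    have hle : ∀ x ∈ Set.Icc a (a+1/2), (fa - da * a) + da * x ≤ (Pfun m x)⁻¹ := by
      intro x hx
      have := tangent_le_right m ha hx.1
      rw [← hfa, ← hda] at this
      linarith [this]
    calc fa / 2 + da / 8
        = (fa - da * a) * ((a+1/2) - a) + da * (((a+1/2) ^ 2 - a ^ 2) / 2) := by ring
      _ = ∫ x in a..(a+1/2), ((fa - da * a) + da * x) := (integral_affine _ _ _ _).symm
      _ ≤ ∫ x in a..(a+1/2), (Pfun m x)⁻¹ :=
          intervalIntegral.integral_mono_on h1 (affine_integrable _ _ _ _)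
            (fi_integrable m ha h1) hle
  have hp2 : fb / 2 - db / 8 ≤ ∫ x in (a+1/2)..(a+1), (Pfun m x)⁻¹ := by
    have hle : ∀ x ∈ Set.Icc (a+1/2) (a+1), (fb - db * (a+1)) + db * x ≤ (Pfun m x)⁻¹ := by
      intro x hx
      have := tangent_le_left m (le_trans hmid hx.1) hx.2
      rw [← hfb, ← hdb] at this
      linarith [this]
    calc fb / 2 - db / 8
        = (fb - db * (a+1)) * ((a+1) - (a+1/2)) + db * (((a+1) ^ 2 - (a+1/2) ^ 2) / 2) := by
          ring
      _ = ∫ x in (a+1/2)..(a+1), ((fb - db * (a+1)) + db * x) := (integral_affine _ _ _ _).symm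
      _ ≤ ∫ x in (a+1/2)..(a+1), (Pfun m x)⁻¹ :=
          intervalIntegral.integral_mono_on h2 (affine_integrable _ _ _ _)
            (fi_integrable m hmid h2) hle
  have hF : lnIter m (a+1) - lnIter m a = ∫ x in a..(a+1), (Pfun m x)⁻¹ :=
    (integral_f m ha (by linarith)).symm
  rw [hF, ← hsplit]
  linarith

lemma denomL_eq_Pfun (j : ℕ) (hj : 1 ≤ j) (x : ℝ) : denomL j x = Pfun j x := by
  obtain ⟨n, rfl⟩ : ∃ n, j = n + 1 := ⟨j - 1, by omega⟩
  rw [denomL, Pfun, Finset.prod_range_succ']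
  have h0 : lnIter 0 x = x := rfl
  rw [h0, mul_comm]
  congr 1
  rw [Nat.add_sub_cancel, ← Finset.Ico_add_one_right_eq_Icc, Finset.prod_Ico_eq_prod_range]
  apply Finset.prod_congr (by norm_num)
  intro i _
  congr 1
  omega

/-- `f` at natural points. -/
noncomputable def fN (j k : ℕ) : ℝ := (Pfun j (k : ℝ))⁻¹
/-- derivative of `f` at natural points. -/
noncomputable def fdN (j k : ℕ) : ℝ := -(gfun j (k : ℝ) / Pfun j (k : ℝ))
/-- trapezoid error on `[k, k+1]`. -/
noncomputable def dN (j k : ℕ) : ℝ :=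
  (fN j k + fN j (k+1)) / 2 - (lnIter j ((k : ℝ) + 1) - lnIter j (k : ℝ))
/-- partial sums of trapezoid errors. -/
noncomputable def TN (j A n : ℕ) : ℝ := ∑ k ∈ Finset.Ico A n, dN j k


end IterAux

/-- For each `j ≥ 2` there is a constant `γ_j` and a `C > 0` such that for
all sufficiently large `n`,
`|l_j(n) − ln_j(n) − γ_j − 1/(2·n·ln n⋯ln_{j−1} n)| ≤ C/(n²·ln n⋯ln_{j−1} n)`;
in particular `l_j(n) − ln_j(n) → γ_j`. -/
theorem iterated_l_asymptotics (j : ℕ) (hj : 2 ≤ j) :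
    ∃ γ C : ℝ, 0 < C ∧
      (∀ᶠ n : ℕ in atTop,
        |lSum j n - lnIter j (n : ℝ) - γ - 1 / (2 * denomL j (n : ℝ))| ≤
          C / ((n : ℝ) * denomL j (n : ℝ))) ∧
      Tendsto (fun n : ℕ => lSum j n - lnIter j (n : ℝ)) atTop (nhds γ) := by
  have hj1 : 1 ≤ j := by omega
  set A : ℕ := max (lowerA j) (⌈hyperE j⌉₊ + 1) with hA
  have hA_E : hyperE j ≤ (A : ℝ) := by
    calc hyperE j ≤ (⌈hyperE j⌉₊ : ℝ) := Nat.le_ceil _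
    _ ≤ (A : ℝ) := by
      have : ⌈hyperE j⌉₊ ≤ A := le_trans (Nat.le_succ _) (le_max_right _ _)
      exact_mod_cast this
  have hA1 : 1 ≤ A := le_trans (by omega) (le_max_right _ _)
  have hAlow : lowerA j ≤ A := le_max_left _ _
  have hcastE : ∀ n : ℕ, A ≤ n → hyperE j ≤ (n : ℝ) := fun n hn =>
    le_trans hA_E (by exact_mod_cast hn)
  have hd0 : ∀ k, A ≤ k → 0 ≤ dN j k := by
    intro k hk
    have := trapezoid_le j (hcastE k hk)
    rw [dN, fN, fN]
    push_cast
    linarith [this]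
  have hd8 : ∀ k, A ≤ k → dN j k ≤ (fdN j (k+1) - fdN j k) / 8 := by
    intro k hk
    have := trapezoid_ge j (hcastE k hk)
    rw [dN, fN, fN, fdN, fdN]
    push_cast
    linarith [this]
  have hfd0 : ∀ k, A ≤ k → fdN j k ≤ 0 := by
    intro k hk
    rw [fdN, neg_nonpos]
    exact div_nonneg (gfun_nonneg j (hcastE k hk)) (le_of_lt (Pfun_pos j (hcastE k hk)))
  have htel : ∀ g : ℕ → ℝ, ∀ a n : ℕ, a ≤ n →
      ∑ k ∈ Finset.Ico a n, (g (k+1) - g k) = g n - g a := by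
    intro g a n han
    induction n, han using Nat.le_induction with
    | base => simp
    | succ n hn ih => rw [Finset.sum_Ico_succ_top hn, ih]; ring
  have hsum_le : ∀ a n : ℕ, A ≤ a → a ≤ n →
      ∑ k ∈ Finset.Ico a n, dN j k ≤ (fdN j n - fdN j a) / 8 := by
    intro a n hAa han
    calc ∑ k ∈ Finset.Ico a n, dN j k
        ≤ ∑ k ∈ Finset.Ico a n, (fdN j (k+1) - fdN j k) / 8 := by
          apply Finset.sum_le_sum
          intro k hk
          exact hd8 k (le_trans hAa (Finset.mem_Ico.mp hk).1)
      _ = (∑ k ∈ Finset.Ico a n, (fdN j (k+1) - fdN j k)) / 8 := by rw [Finset.sum_div]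
      _ = (fdN j n - fdN j a) / 8 := by rw [htel (fdN j) a n han]
  have hTmono : Monotone (TN j A) := by
    intro n m hnm
    apply Finset.sum_le_sum_of_subset_of_nonneg (Finset.Ico_subset_Ico le_rfl hnm)
    intro k hk _
    exact hd0 k (Finset.mem_Ico.mp hk).1
  have hTbdd : ∀ n, TN j A n ≤ -fdN j A / 8 := by
    intro n
    rcases le_or_gt A n with h | h
    · calc TN j A n ≤ (fdN j n - fdN j A) / 8 := hsum_le A n le_rfl h
      _ ≤ -fdN j A / 8 := by linarith [hfd0 n h]
    · have h0 : TN j A n = 0 := by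
        rw [TN, Finset.Ico_eq_empty_of_le (le_of_lt h), Finset.sum_empty]
      rw [h0]
      linarith [hfd0 A le_rfl]
  have hbdd : BddAbove (Set.range (TN j A)) :=
    ⟨-fdN j A / 8, by rintro _ ⟨n, rfl⟩; exact hTbdd n⟩
  set Tinf : ℝ := ⨆ n, TN j A n with hTinf
  have hTtend : Tendsto (TN j A) atTop (nhds Tinf) := tendsto_atTop_ciSup hTmono hbdd
  have hTle : ∀ n, TN j A n ≤ Tinf := fun n => le_ciSup hbdd n
  have htail : ∀ n, A ≤ n → Tinf - TN j A n ≤ -fdN j n / 8 := by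
    intro n hn
    have h5 : Tinf ≤ TN j A n + -fdN j n / 8 := by
      apply ciSup_le
      intro m
      rcases le_or_gt m n with h | h
      · linarith [hTmono h, hfd0 n hn]
      · have hsplit : TN j A n + ∑ k ∈ Finset.Ico n m, dN j k = TN j A m :=
          Finset.sum_Ico_consecutive _ hn (le_of_lt h)
        have h2 := hsum_le n m hn (le_of_lt h)
        have h3 := hfd0 m (le_trans hn (le_of_lt h))
        linarith
    linarith
  have hS : ∀ n, A ≤ n → ∑ k ∈ Finset.Icc A n, fN j k =
      lnIter j (n : ℝ) - lnIter j (A : ℝ) + (fN j A + fN j n) / 2 + TN j A n := by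
    intro n hn
    induction n, hn using Nat.le_induction with
    | base =>
      rw [Finset.Icc_self, Finset.sum_singleton, TN]
      simp
    | succ n hn ih =>
      rw [Finset.sum_Icc_succ_top (le_trans hn (Nat.le_succ n)), ih]
      have hTsucc : TN j A (n+1) = TN j A n + dN j n := by
        rw [TN, TN, Finset.sum_Ico_succ_top hn]
      rw [hTsucc, dN]
      push_cast
      ring
  have hlSum : ∀ n, A ≤ n → lSum j n =
      (∑ k ∈ Finset.Ico (lowerA j) A, 1 / denomL j (k : ℝ)) + ∑ k ∈ Finset.Icc A n, fN j k := by
    intro n hn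
    rw [lSum, ← Finset.Ico_add_one_right_eq_Icc,
      ← Finset.sum_Ico_consecutive _ hAlow (le_trans hn (Nat.le_add_right n 1)),
      Finset.Ico_add_one_right_eq_Icc]
    congr 1
    apply Finset.sum_congr rfl
    intro k _
    rw [denomL_eq_Pfun j hj1, one_div, fN]
  set c0 : ℝ := ∑ k ∈ Finset.Ico (lowerA j) A, 1 / denomL j (k : ℝ) with hc0
  set γ : ℝ := c0 - lnIter j (A : ℝ) + fN j A / 2 + Tinf with hγ
  have key : ∀ n, A ≤ n →
      lSum j n - lnIter j (n : ℝ) - γ - 1 / (2 * denomL j (n : ℝ)) = TN j A n - Tinf := by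
    intro n hn
    rw [hlSum n hn, hS n hn, denomL_eq_Pfun j hj1]
    have h2 : 1 / (2 * Pfun j (n:ℝ)) = fN j n / 2 := by
      rw [fN, one_div, mul_inv]; ring
    rw [h2, hγ]
    ring
  refine ⟨γ, j, by positivity, ?_, ?_⟩
  · filter_upwards [eventually_ge_atTop A] with n hn
    have hPpos : 0 < Pfun j (n : ℝ) := Pfun_pos j (hcastE n hn)
    have hnpos : (0:ℝ) < (n : ℝ) := by
      have h1 : 1 ≤ n := le_trans hA1 hn
      exact_mod_cast Nat.lt_of_lt_of_le Nat.zero_lt_one h1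
    rw [key n hn, denomL_eq_Pfun j hj1, abs_sub_comm,
      abs_of_nonneg (by linarith [hTle n])]
    have h4 : -fdN j n ≤ (j : ℝ) / ((n:ℝ) * Pfun j (n:ℝ)) := by
      rw [fdN, neg_neg, ← div_div]
      have hgle : gfun j (n:ℝ) ≤ (j:ℝ) / (n:ℝ) := gfun_le j (hcastE n hn)
      exact (div_le_div_iff_of_pos_right hPpos).mpr hgle
    have h5 := htail n hn
    have h6 : 0 ≤ -fdN j n := by linarith [hfd0 n hn]
    calc Tinf - TN j A n ≤ -fdN j n / 8 := h5
    _ ≤ -fdN j n := by linarith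
    _ ≤ (j : ℝ) / ((n:ℝ) * Pfun j (n:ℝ)) := h4
  · have heq : (fun n : ℕ => γ + fN j n / 2 + (TN j A n - Tinf)) =ᶠ[atTop]
        (fun n : ℕ => lSum j n - lnIter j (n : ℝ)) := by
      filter_upwards [eventually_ge_atTop A] with n hn
      have h2 : 1 / (2 * denomL j ((n:ℕ):ℝ)) = fN j n / 2 := by
        rw [denomL_eq_Pfun j hj1, fN, one_div, mul_inv]; ring
      have := key n hn
      rw [h2] at this
      linarith [this]
    apply Tendsto.congr' heq
    have hfz : Tendsto (fun n : ℕ => fN j n / 2) atTop (nhds 0) := by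
      have hup : ∀ᶠ n : ℕ in atTop, fN j n / 2 ≤ (n : ℝ)⁻¹ := by
        filter_upwards [eventually_ge_atTop A] with n hn
        have hPpos : 0 < Pfun j (n : ℝ) := Pfun_pos j (hcastE n hn)
        have h1 : (n:ℝ) ≤ Pfun j (n:ℝ) := le_Pfun j hj1 (hcastE n hn)
        have h2 : fN j n ≤ (n:ℝ)⁻¹ := by
          rw [fN]
          apply inv_anti₀ _ h1
          have h3 : (1:ℝ) ≤ (n:ℝ) := by exact_mod_cast le_trans hA1 hn
          linarith
        have h4 : 0 ≤ fN j n := le_of_lt (inv_pos.mpr hPpos)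
        linarith
      have hlo : ∀ᶠ n : ℕ in atTop, 0 ≤ fN j n / 2 := by
        filter_upwards [eventually_ge_atTop A] with n hn
        have hPpos : 0 < Pfun j (n : ℝ) := Pfun_pos j (hcastE n hn)
        rw [fN]
        positivity
      have hz : Tendsto (fun n : ℕ => (n : ℝ)⁻¹) atTop (nhds 0) :=
        tendsto_inv_atTop_zero.comp tendsto_natCast_atTop_atTop
      exact squeeze_zero' hlo hup hz
    have hTz : Tendsto (fun n => TN j A n - Tinf) atTop (nhds 0) := by
      have := hTtend.sub (tendsto_const_nhds (x := Tinf))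
      simpa using this
    have := (tendsto_const_nhds (x := γ)).add hfz |>.add hTz
    simpa using this
end

section
/- For each integer j ≥ 2 there exists a real constant γ′_j such that h_j(n) − l_j(n) converges to γ′_j as n → ∞, and there exist constants 0 < a < b such that for all sufficiently large n, a/ln_{j−1}(n) ≤ |h_j(n) − l_j(n) − γ′_j| ≤ b/ln_{j−1}(n). Consequently h_j(n) tends to ∞ at the same rate as the j-th iterated logarithm. -/
open Filter Finset

namespace IHaux

lemma denomH_succ (j k : ℕ) : denomH (j+1) k = denomH j k * hIter (j+1) k := by
  rfl


lemma denomH_zero (k : ℕ) : denomH 0 k = (k : ℚ) := rfl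

lemma denomH_pos : ∀ i, ∀ k, 1 ≤ k → 0 < denomH i k := by
  intro i
  induction i with
  | zero =>
    intro k hk
    rw [denomH_zero]
    exact_mod_cast Nat.lt_of_lt_of_le Nat.zero_lt_one hk
  | succ j ih =>
    intro k hk
    rw [denomH_succ]
    have h1 : (0:ℚ) < ∑ m ∈ Finset.Icc 1 k, 1 / denomH j m := by
      apply Finset.sum_pos
      · intro m hm
        simp only [Finset.mem_Icc] at hm
        exact div_pos one_pos (ih m hm.1)
      · exact ⟨1, by simp [hk]⟩
    exact mul_pos (ih k hk) h1

lemma denomH_one : ∀ i, denomH i 1 = 1 := by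
  intro i
  induction i with
  | zero => rfl
  | succ j ih => rw [denomH_succ, ih]; simp [hIter, ih]

lemma hIter_succ_def (i n : ℕ) : hIter (i+1) n = ∑ k ∈ Finset.Icc 1 n, 1 / denomH i k := rfl

lemma one_le_hIter (i n : ℕ) (hn : 1 ≤ n) : 1 ≤ hIter (i+1) n := by
  rw [hIter_succ_def]
  have h1 := Finset.single_le_sum (f := fun m => 1 / denomH i m)
    (fun m hm => le_of_lt (div_pos one_pos (denomH_pos i m (Finset.mem_Icc.mp hm).1)))
    (Finset.mem_Icc.mpr ⟨le_refl 1, hn⟩)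
  simpa [denomH_one] using h1

lemma hIter_pos (i n : ℕ) (hn : 1 ≤ n) : 0 < hIter (i+1) n :=
  lt_of_lt_of_le one_pos (one_le_hIter i n hn)

lemma nat_le_denomH : ∀ i (k : ℕ), (k : ℚ) ≤ denomH i k := by
  intro i
  induction i with
  | zero => intro k; rw [denomH_zero]
  | succ j ih =>
    intro k
    rcases Nat.eq_zero_or_pos k with h | h
    · subst h; rw [denomH_succ]; simp [hIter_succ_def]
    · rw [denomH_succ]
      calc ((k:ℕ) : ℚ) = (k:ℚ) * 1 := by ring
      _ ≤ denomH j k * hIter (j+1) k :=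
          mul_le_mul (ih k) (one_le_hIter j k h) zero_le_one
            (le_of_lt (denomH_pos j k h))

lemma hIter_mono (i : ℕ) : Monotone (hIter (i+1)) := by
  intro m n hmn
  apply Finset.sum_le_sum_of_subset_of_nonneg
  · exact Finset.Icc_subset_Icc_right hmn
  · intro k hk _
    simp only [Finset.mem_Icc] at hk
    exact le_of_lt (div_pos one_pos (denomH_pos i k hk.1))

lemma hIter_succ_n (i n : ℕ) : hIter (i+1) (n+1) = hIter (i+1) n + 1 / denomH i (n+1) := by
  rw [hIter_succ_def, hIter_succ_def, ← Finset.Ico_add_one_right_eq_Icc, ← Finset.Ico_add_one_right_eq_Icc,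
    Finset.sum_Ico_succ_top (by omega)]

lemma h1_ge (k : ℕ) (hk : 2 ≤ k) : (3/2 : ℚ) ≤ hIter 1 k := by
  have h2 : hIter 1 2 = 3/2 := by
    rw [show (2:ℕ) = 1 + 1 from rfl, hIter_succ_n 0 1]
    norm_num [hIter_succ_def, denomH_zero, denomH_one]
  calc (3/2:ℚ) = hIter 1 2 := h2.symm
  _ ≤ hIter 1 k := hIter_mono 0 hk

lemma denomH_ge_32 : ∀ i, 1 ≤ i → ∀ (k : ℕ), 2 ≤ k → (3/2 : ℚ) * (k:ℚ) ≤ denomH i k := by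
  intro i
  induction i with
  | zero => omega
  | succ j ih =>
    intro _ k hk
    rcases Nat.eq_zero_or_pos j with h | h
    · subst h
      rw [denomH_succ, denomH_zero]
      calc (3/2:ℚ) * (k:ℚ) = (k:ℚ) * (3/2) := by ring
      _ ≤ (k:ℚ) * hIter 1 k :=
          mul_le_mul_of_nonneg_left (h1_ge k hk) (by positivity)
    · rw [denomH_succ]
      calc (3/2:ℚ) * (k:ℚ) ≤ denomH j k := ih h k hk
      _ = denomH j k * 1 := by ring
      _ ≤ denomH j k * hIter (j+1) k :=
          mul_le_mul_of_nonneg_left (one_le_hIter j k (by omega))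
            (le_of_lt (denomH_pos j k (by omega)))

end IHaux

namespace IHaux

lemma lnIter_zero (x : ℝ) : lnIter 0 x = x := rfl

lemma lnIter_succ (i : ℕ) (x : ℝ) : lnIter (i+1) x = Real.log (lnIter i x) := by
  simp [lnIter, Function.iterate_succ_apply']

lemma lnIter_one (x : ℝ) : lnIter 1 x = Real.log x := by rw [lnIter_succ, lnIter_zero]

lemma hyperE_pos (i : ℕ) : 0 < hyperE i := by
  cases i with
  | zero => norm_num [hyperE]
  | succ n => exact Real.exp_pos _

lemma one_le_hyperE (i : ℕ) : 1 ≤ hyperE i := by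
  cases i with
  | zero => norm_num [hyperE]
  | succ n => rw [show hyperE (n+1) = Real.exp (hyperE n) from rfl]
              calc (1:ℝ) ≤ 1 + hyperE n := by linarith [hyperE_pos n]
              _ ≤ Real.exp (hyperE n) := by
                  have := Real.add_one_le_exp (hyperE n); linarith

lemma hyperE_add_one_le_succ (i : ℕ) : hyperE i + 1 ≤ hyperE (i+1) := by
  rw [show hyperE (i+1) = Real.exp (hyperE i) from rfl]
  have := Real.add_one_le_exp (hyperE i); linarith

lemma hyperE_le_succ (i : ℕ) : hyperE i ≤ hyperE (i+1) := by
  linarith [hyperE_add_one_le_succ i]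

lemma hyperE_mono {i m : ℕ} (h : i ≤ m) : hyperE i ≤ hyperE m := by
  induction m with
  | zero => simp_all
  | succ n ih =>
    rcases Nat.lt_or_ge i (n+1) with h' | h'
    · exact le_trans (ih (by omega)) (hyperE_le_succ n)
    · have : i = n + 1 := by omega
      subst this; rfl

lemma log_hyperE_succ (i : ℕ) : Real.log (hyperE (i+1)) = hyperE i := by
  rw [show hyperE (i+1) = Real.exp (hyperE i) from rfl, Real.log_exp]

/-- iterated log of x ≥ hyperE m is ≥ hyperE (m - i)  -/
lemma hyperE_le_lnIter : ∀ i m, i ≤ m → ∀ x : ℝ, hyperE m ≤ x →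
    hyperE (m - i) ≤ lnIter i x := by
  intro i
  induction i with
  | zero => intro m _ x hx; simpa [lnIter_zero] using hx
  | succ n ih =>
    intro m hm x hx
    rw [lnIter_succ]
    have h1 : hyperE (m - n) ≤ lnIter n x := ih m (by omega) x hx
    have h2 : m - n = (m - (n+1)) + 1 := by omega
    rw [h2] at h1
    calc hyperE (m - (n+1)) = Real.log (hyperE (m - (n+1) + 1)) := (log_hyperE_succ _).symm
    _ ≤ Real.log (lnIter n x) := Real.log_le_log (hyperE_pos _) h1

lemma one_le_lnIter {i m : ℕ} (h : i ≤ m) {x : ℝ} (hx : hyperE m ≤ x) :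
    1 ≤ lnIter i x :=
  le_trans (one_le_hyperE _) (hyperE_le_lnIter i m h x hx)

lemma lnIter_pos {i m : ℕ} (h : i ≤ m) {x : ℝ} (hx : hyperE m ≤ x) :
    0 < lnIter i x := lt_of_lt_of_le one_pos (one_le_lnIter h hx)

/-- monotonicity in x -/
lemma lnIter_mono : ∀ i {x y : ℝ}, hyperE i ≤ x → x ≤ y → lnIter i x ≤ lnIter i y := by
  intro i
  induction i with
  | zero => intro x y _ hxy; simpa [lnIter_zero] using hxy
  | succ n ih =>
    intro x y hx hxy
    rw [lnIter_succ, lnIter_succ]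
    have hx' : hyperE n ≤ x := le_trans (hyperE_le_succ n) hx
    exact Real.log_le_log (lnIter_pos (le_refl n) hx') (ih hx' hxy)

/-- antitonicity in the index -/
lemma lnIter_succ_le {i m : ℕ} (h : i + 1 ≤ m) {x : ℝ} (hx : hyperE m ≤ x) :
    lnIter (i+1) x ≤ lnIter i x := by
  rw [lnIter_succ]
  have h1 : 0 < lnIter i x := lnIter_pos (by omega) hx
  linarith [Real.log_le_sub_one_of_pos h1]

lemma lnIter_anti {s t m : ℕ} (hst : s ≤ t) (h : t ≤ m) {x : ℝ} (hx : hyperE m ≤ x) :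
    lnIter t x ≤ lnIter s x := by
  induction t with
  | zero => have : s = 0 := by omega
            subst this; rfl
  | succ n ih =>
    rcases Nat.lt_or_ge s (n+1) with h' | h'
    · exact le_trans (lnIter_succ_le h hx) (ih (by omega) (by omega))
    · have : s = n + 1 := by omega
      subst this; rfl

lemma denomL_succ (i : ℕ) (x : ℝ) :
    denomL (i+2) x = denomL (i+1) x * lnIter (i+1) x := by
  simp only [denomL]
  rw [show (i+2) - 1 = i + 1 from rfl, show (i+1) - 1 = i from rfl,
    ← Finset.Ico_add_one_right_eq_Icc, ← Finset.Ico_add_one_right_eq_Icc, Finset.prod_Ico_succ_top (by omega)]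
  ring

lemma denomL_one (x : ℝ) : denomL 1 x = x := by
  simp [denomL]

lemma x_le_denomL (i : ℕ) {m : ℕ} (h : i ≤ m) {x : ℝ} (hx : hyperE m ≤ x) :
    x ≤ denomL (i+1) x := by
  induction i with
  | zero => simp [denomL_one]
  | succ n ih =>
    rw [denomL_succ]
    calc x ≤ denomL (n+1) x := ih (by omega)
    _ = denomL (n+1) x * 1 := by ring
    _ ≤ denomL (n+1) x * lnIter (n+1) x := by
        apply mul_le_mul_of_nonneg_left (one_le_lnIter (by omega) hx)
        have hx1 : (1:ℝ) ≤ x := le_trans (one_le_hyperE m) hx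
        linarith [ih (by omega)]

lemma denomL_pos {i m : ℕ} (h : i ≤ m) {x : ℝ} (hx : hyperE m ≤ x) :
    0 < denomL (i+1) x := by
  have hx1 : (1:ℝ) ≤ x := le_trans (one_le_hyperE m) hx
  linarith [x_le_denomL i h hx]

lemma denomL_mono {i m : ℕ} (h : i ≤ m) {x y : ℝ} (hx : hyperE m ≤ x) (hxy : x ≤ y) :
    denomL (i+1) x ≤ denomL (i+1) y := by
  induction i with
  | zero => simpa [denomL_one] using hxy
  | succ n ih =>
    rw [denomL_succ, denomL_succ]
    apply mul_le_mul (ih (by omega))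
    · exact lnIter_mono (n+1) (le_trans (hyperE_mono (by omega : n+1 ≤ m)) hx) hxy
    · exact le_of_lt (lnIter_pos (by omega) hx)
    · exact le_of_lt (lt_of_lt_of_le (denomL_pos (by omega) hx) (ih (by omega)))

end IHaux

namespace IHaux

lemma hasDerivAt_lnIter : ∀ i {x : ℝ}, hyperE i < x →
    HasDerivAt (lnIter (i+1)) (1 / denomL (i+1) x) x := by
  intro i
  induction i with
  | zero =>
    intro x hx
    have hx0 : x ≠ 0 := by
      have h1 : (1:ℝ) < x := by simpa [hyperE] using hx
      linarith
    have h := Real.hasDerivAt_log hx0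
    have h2 : HasDerivAt (lnIter 1) x⁻¹ x := by
      have : lnIter 1 = Real.log := funext lnIter_one
      rw [this]; exact h
    simpa [denomL_one, one_div] using h2
  | succ n ih =>
    intro x hx
    have hx' : hyperE n < x := lt_of_le_of_lt (hyperE_le_succ n) hx
    have h1 : HasDerivAt (lnIter (n+1)) (1 / denomL (n+1) x) x := ih hx'
    have hpos : 0 < lnIter (n+1) x := lnIter_pos (le_refl (n+1)) (le_of_lt hx)
    have h2 := h1.log (ne_of_gt hpos)
    have h3 : lnIter (n+2) = fun y => Real.log (lnIter (n+1) y) := funext (lnIter_succ (n+1))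
    rw [h3]
    convert h2 using 1
    rw [denomL_succ]
    field_simp

/-- MVT bounds for increments of `lnIter (i+1)` on `[x, x+1]`. -/
lemma lnIter_incr {i : ℕ} {x : ℝ} (hx : hyperE i < x) :
    1 / denomL (i+1) (x+1) ≤ lnIter (i+1) (x+1) - lnIter (i+1) x ∧
    lnIter (i+1) (x+1) - lnIter (i+1) x ≤ 1 / denomL (i+1) x := by
  have hlt : x < x + 1 := by linarith
  have hcont : ContinuousOn (lnIter (i+1)) (Set.Icc x (x+1)) := by
    intro y hy
    have hy' : hyperE i < y := lt_of_lt_of_le hx hy.1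
    exact ((hasDerivAt_lnIter i hy').continuousAt).continuousWithinAt
  have hderiv : ∀ y ∈ Set.Ioo x (x+1), HasDerivAt (lnIter (i+1)) (1 / denomL (i+1) y) y :=
    fun y hy => hasDerivAt_lnIter i (lt_trans hx hy.1)
  obtain ⟨c, hc, hceq⟩ := exists_hasDerivAt_eq_slope (lnIter (i+1)) _ hlt hcont hderiv
  have hslope : lnIter (i+1) (x+1) - lnIter (i+1) x = 1 / denomL (i+1) c := by
    rw [hceq]; field_simp; ring
  have hcx : hyperE i ≤ x := le_of_lt hx
  have hcc : hyperE i ≤ c := le_trans hcx (le_of_lt hc.1)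
  have hpos_x : 0 < denomL (i+1) x := denomL_pos (le_refl i) hcx
  have hpos_c : 0 < denomL (i+1) c := denomL_pos (le_refl i) hcc
  constructor
  · rw [hslope]
    apply one_div_le_one_div_of_le hpos_c
    exact denomL_mono (le_refl i) hcc (le_of_lt hc.2)
  · rw [hslope]
    apply one_div_le_one_div_of_le hpos_x
    exact denomL_mono (le_refl i) hcx (le_of_lt hc.1)

/-- MVT bounds for increments of `x ↦ (lnIter (i+1) x)⁻¹` on `[x, x+1]`. -/
lemma inv_lnIter_incr {i : ℕ} {x : ℝ} (hx : hyperE (i+1) < x) :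
    1 / (denomL (i+2) (x+1) * lnIter (i+1) (x+1)) ≤
      (lnIter (i+1) x)⁻¹ - (lnIter (i+1) (x+1))⁻¹ ∧
    (lnIter (i+1) x)⁻¹ - (lnIter (i+1) (x+1))⁻¹ ≤
      1 / (denomL (i+2) x * lnIter (i+1) x) := by
  have hlt : x < x + 1 := by linarith
  set g : ℝ → ℝ := fun y => (lnIter (i+1) y)⁻¹ with hg
  have key : ∀ y : ℝ, hyperE (i+1) < y →
      HasDerivAt g (-(1 / (denomL (i+2) y * lnIter (i+1) y))) y := by
    intro y hy
    have h1 : HasDerivAt (lnIter (i+1)) (1 / denomL (i+1) y) y :=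
      hasDerivAt_lnIter i (lt_of_le_of_lt (hyperE_le_succ i) hy)
    have hpos : 0 < lnIter (i+1) y := lnIter_pos (le_refl (i+1)) (le_of_lt hy)
    have h2 := h1.inv (ne_of_gt hpos)
    refine h2.congr_deriv ?_
    rw [denomL_succ]
    have hD : denomL (i+1) y ≠ 0 := ne_of_gt (denomL_pos (by omega) (le_trans (hyperE_le_succ i) (le_of_lt hy)))
    field_simp
  have hcont : ContinuousOn g (Set.Icc x (x+1)) := fun y hy =>
    ((key y (lt_of_lt_of_le hx hy.1)).continuousAt).continuousWithinAt
  obtain ⟨c, hc, hceq⟩ := exists_hasDerivAt_eq_slope g _ hlt hcont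
    (fun y hy => key y (lt_trans hx hy.1))
  have hslope : g x - g (x+1) = 1 / (denomL (i+2) c * lnIter (i+1) c) := by
    have : g (x+1) - g x = -(1 / (denomL (i+2) c * lnIter (i+1) c)) := by
      rw [hceq]; field_simp; ring
    linarith
  have hcx : hyperE (i+1) ≤ x := le_of_lt hx
  have hcc : hyperE (i+1) ≤ c := le_trans hcx (le_of_lt hc.1)
  have hux : 0 < denomL (i+2) x * lnIter (i+1) x :=
    mul_pos (denomL_pos (le_refl (i+1)) hcx) (lnIter_pos (le_refl (i+1)) hcx)
  have huc : 0 < denomL (i+2) c * lnIter (i+1) c :=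
    mul_pos (denomL_pos (le_refl (i+1)) hcc) (lnIter_pos (le_refl (i+1)) hcc)
  have humono : ∀ {y z : ℝ}, hyperE (i+1) ≤ y → y ≤ z →
      denomL (i+2) y * lnIter (i+1) y ≤ denomL (i+2) z * lnIter (i+1) z := by
    intro y z hy hyz
    apply mul_le_mul (denomL_mono (le_refl (i+1)) hy hyz)
      (lnIter_mono (i+1) (le_trans (by exact le_refl _) hy) hyz)
      (le_of_lt (lnIter_pos (le_refl (i+1)) hy))
      (le_of_lt (denomL_pos (le_refl (i+1)) (le_trans hy hyz)))
  constructor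
  · rw [show (lnIter (i+1) x)⁻¹ - (lnIter (i+1) (x+1))⁻¹ = g x - g (x+1) from rfl, hslope]
    exact one_div_le_one_div_of_le huc (humono hcc (le_of_lt hc.2))
  · rw [show (lnIter (i+1) x)⁻¹ - (lnIter (i+1) (x+1))⁻¹ = g x - g (x+1) from rfl, hslope]
    exact one_div_le_one_div_of_le hux (humono hcx (le_of_lt hc.1))

lemma tendsto_lnIter_atTop : ∀ i, Tendsto (fun x : ℝ => lnIter i x) atTop atTop := by
  intro i
  induction i with
  | zero => exact tendsto_id
  | succ n ih =>
    have h : (fun x : ℝ => lnIter (n+1) x) = Real.log ∘ (fun x => lnIter n x) :=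
      funext fun x => lnIter_succ n x
    rw [h]
    exact Real.tendsto_log_atTop.comp ih

lemma tendsto_lnIter_nat_atTop (i : ℕ) :
    Tendsto (fun n : ℕ => lnIter i (n : ℝ)) atTop atTop :=
  (tendsto_lnIter_atTop i).comp tendsto_natCast_atTop_atTop

end IHaux

namespace IHaux

lemma hIter_one_val (i : ℕ) : hIter (i+1) 1 = 1 := by
  rw [hIter_succ_def]
  simp [denomH_one]

/-- base lower bound for `h₁` -/
lemma h1_lower : ∀ n : ℕ, 2 ≤ n →
    Real.log n + (1 - Real.log 2) + 1/(n:ℝ) ≤ (hIter 1 n : ℝ) := by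
  intro n hn
  induction n with
  | zero => omega
  | succ m ih =>
    rcases Nat.lt_or_ge m 2 with hm | hm
    · have : m = 1 := by omega
      subst this
      have h2 : hIter 1 2 = 3/2 := by
        rw [show (2:ℕ) = 1 + 1 from rfl, hIter_succ_n 0 1, hIter_one_val]
        norm_num [denomH_zero]
      rw [h2]
      norm_num
    · have ihm := ih hm
      have hm1 : (1:ℝ) ≤ (m:ℝ) := by exact_mod_cast Nat.one_le_iff_ne_zero.mpr (by omega)
      have hmpos : (0:ℝ) < m := by linarith
      have hstep : Real.log ((m:ℝ)+1) ≤ Real.log m + 1/(m:ℝ) := by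
        have h1 : Real.log (((m:ℝ)+1)/m) ≤ ((m:ℝ)+1)/m - 1 :=
          Real.log_le_sub_one_of_pos (by positivity)
        rw [Real.log_div (by linarith) (ne_of_gt hmpos)] at h1
        have h2 : ((m:ℝ)+1)/m - 1 = 1/m := by field_simp; ring
        linarith [h1, h2 ▸ h1]
      have hsum : (hIter 1 (m+1) : ℝ) = (hIter 1 m : ℝ) + 1/((m:ℝ)+1) := by
        rw [hIter_succ_n]
        push_cast [denomH_zero]
        ring
      rw [hsum]
      push_cast
      have : (1:ℝ)/m ≥ 1/((m:ℝ)+1) := by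
        apply one_div_le_one_div_of_le hmpos; linarith
      push_cast at ihm
      linarith [hstep]

/-- inductive lower bound: `h_{i+2}(n) ≥ log h_{i+1}(n) + 1/3 + 2/(3n)` -/
lemma hIter_log_lower (i : ℕ) : ∀ n : ℕ, 1 ≤ n →
    Real.log ((hIter (i+1) n : ℝ)) + 1/3 + 2/(3*(n:ℝ)) ≤ (hIter (i+2) n : ℝ) := by
  intro n hn
  induction n with
  | zero => omega
  | succ m ih =>
    rcases Nat.eq_zero_or_pos m with hm | hm
    · subst hm
      rw [hIter_one_val, hIter_one_val]
      norm_num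
    · have ihm := ih hm
      -- notation
      set a : ℝ := (hIter (i+1) m : ℝ) with ha
      set b : ℝ := (hIter (i+1) (m+1) : ℝ) with hb
      have hapos : (1:ℝ) ≤ a := by
        rw [ha]; exact_mod_cast one_le_hIter i m hm
      have hbpos : (1:ℝ) ≤ b := by
        rw [hb]; exact_mod_cast one_le_hIter i (m+1) (by omega)
      have hd : b = a + ((1 / denomH i (m+1) : ℚ) : ℝ) := by
        rw [ha, hb, hIter_succ_n]; push_cast; ring
      set d : ℝ := ((1 / denomH i (m+1) : ℚ) : ℝ) with hdd
      have hdpos : 0 < d := by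
        rw [hdd]; exact_mod_cast div_pos one_pos (denomH_pos i (m+1) (by omega))
      have hdle : d ≤ 1/((m:ℝ)+1) := by
        rw [hdd]
        have h1 : ((m:ℝ)+1) ≤ ((denomH i (m+1) : ℚ) : ℝ) := by
          exact_mod_cast (by exact_mod_cast nat_le_denomH i (m+1) : ((m+1:ℕ):ℚ) ≤ denomH i (m+1))
        rw [show ((1 / denomH i (m+1) : ℚ) : ℝ) = 1 / ((denomH i (m+1) : ℚ) : ℝ) by push_cast; ring]
        exact one_div_le_one_div_of_le (by positivity) h1
      -- δ = d / b
      set δ : ℝ := ((1 / denomH (i+1) (m+1) : ℚ) : ℝ) with hδ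
      have hsum2 : (hIter (i+2) (m+1) : ℝ) = (hIter (i+2) m : ℝ) + δ := by
        rw [hδ, hIter_succ_n]; push_cast; ring
      have hδb : δ = d / b := by
        rw [hδ, hdd, hb, denomH_succ]
        have h1 : (hIter (i+1) (m+1) : ℚ) ≠ 0 := ne_of_gt (hIter_pos i (m+1) (by omega))
        have h2 : denomH i (m+1) ≠ 0 := ne_of_gt (denomH_pos i (m+1) (by omega))
        push_cast
        field_simp
      have hδle : δ ≤ 2/(3*((m:ℝ)+1)) := by
        have h1 : (3/2:ℚ) * ((m:ℚ)+1) ≤ denomH (i+1) (m+1) := by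
          have h0 := denomH_ge_32 (i+1) (by omega) (m+1) (by omega)
          push_cast at h0
          linarith
        have h2 : ((3/2:ℚ) * ((m:ℚ)+1) : ℚ) > 0 := by positivity
        have h3 : (1 / denomH (i+1) (m+1) : ℚ) ≤ 1 / ((3/2:ℚ) * ((m:ℚ)+1)) :=
          one_div_le_one_div_of_le h2 h1
        have h4 : (1 / ((3/2:ℚ) * ((m:ℚ)+1)) : ℚ) = 2/(3*((m:ℚ)+1)) := by
          rw [div_eq_div_iff (by positivity) (by positivity)]; ring
        rw [h4] at h3
        have h5 : ((1 / denomH (i+1) (m+1) : ℚ) : ℝ) ≤ ((2/(3*((m:ℚ)+1)) : ℚ) : ℝ) := by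
          exact_mod_cast h3
        rw [hδ]
        push_cast at h5 ⊢
        linarith
      -- log b - log a ≤ d/a = δ + δ*(d/a) ≤ δ + δ*d
      have hlog : Real.log b - Real.log a ≤ d/a := by
        have h1 : Real.log (b/a) ≤ b/a - 1 := Real.log_le_sub_one_of_pos (by positivity)
        rw [Real.log_div (by linarith) (by linarith)] at h1
        have h2 : b/a - 1 = d/a := by rw [hd]; field_simp; ring
        linarith
      have hda : d/a ≤ d := div_le_self (le_of_lt hdpos) hapos
      have hkey : Real.log b - Real.log a ≤ δ + 2/(3*(m:ℝ)) - 2/(3*((m:ℝ)+1)) := by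
        have hba : b - a = d := by rw [hd]; ring
        have h1 : d/a - δ ≤ δ * d := by
          rw [hδb]
          have ha0 : a ≠ 0 := by linarith
          have hb0 : b ≠ 0 := by linarith
          have e : d/a - d/b = (d/b) * ((b-a)/a) := by field_simp
          rw [e, hba]
          have hdb0 : 0 ≤ d/b := by positivity
          exact mul_le_mul_of_nonneg_left hda hdb0
        have h2 : δ * d ≤ (2/(3*((m:ℝ)+1))) * (1/((m:ℝ)+1)) := by
          apply mul_le_mul hδle hdle (le_of_lt hdpos) (by positivity)
        have hm1 : (1:ℝ) ≤ (m:ℝ) := by exact_mod_cast hm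
        have h3 : (2/(3*((m:ℝ)+1))) * (1/((m:ℝ)+1)) ≤ 2/(3*(m:ℝ)) - 2/(3*((m:ℝ)+1)) := by
          have e1 : 2/(3*(m:ℝ)) - 2/(3*((m:ℝ)+1)) = 2/(3*(m:ℝ)*((m:ℝ)+1)) := by
            field_simp; ring
          rw [e1]
          rw [show (2/(3*((m:ℝ)+1))) * (1/((m:ℝ)+1)) = 2/(3*((m:ℝ)+1)*((m:ℝ)+1)) by field_simp]
          apply div_le_div_of_nonneg_left (by norm_num) (by positivity)
          nlinarith
        linarith
      push_cast
      push_cast at ihm hsum2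
      rw [hsum2]
      have hm1 : (1:ℝ) ≤ (m:ℝ) := by exact_mod_cast hm
      linarith [hkey]

end IHaux

namespace IHaux

lemma log_two_lt : Real.log 2 < 3/4 := by
  have := Real.log_two_lt_d9
  linarith

/-- main lower bound: `h_{i+1}(n) ≥ ln_{i+1}(n) + 1/4` for `n ≥ hyperE i`. -/
lemma hIter_ge_lnIter : ∀ i, ∀ n : ℕ, hyperE i ≤ (n:ℝ) →
    lnIter (i+1) (n:ℝ) + 1/4 ≤ (hIter (i+1) n : ℝ) := by
  intro i
  induction i with
  | zero =>
    intro n hn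
    have hn1 : 1 ≤ n := by
      by_contra h
      push_neg at h
      interval_cases n
      · simp [hyperE] at hn; linarith
    rw [lnIter_one]
    rcases Nat.lt_or_ge n 2 with h2 | h2
    · have : n = 1 := by omega
      subst this
      rw [hIter_one_val]
      norm_num
    · have h1 := h1_lower n h2
      have h3 : (0:ℝ) < 1/(n:ℝ) := by positivity
      have := log_two_lt
      linarith
  | succ i ih =>
    intro n hn
    have hn' : hyperE i ≤ (n:ℝ) := le_trans (hyperE_le_succ i) hn
    have hn1 : 1 ≤ n := by
      have h1 : (1:ℝ) ≤ (n:ℝ) := le_trans (one_le_hyperE (i+1)) hn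
      exact_mod_cast h1
    have hlow := ih n hn'
    have hLpos : 0 < lnIter (i+1) (n:ℝ) := lnIter_pos (le_refl (i+1)) hn
    have hlog : lnIter (i+2) (n:ℝ) ≤ Real.log ((hIter (i+1) n : ℝ)) := by
      rw [lnIter_succ]
      apply Real.log_le_log hLpos
      linarith
    have hmain := hIter_log_lower i n hn1
    have h2 : (0:ℝ) < 2/(3*(n:ℝ)) := by
      have : (0:ℝ) < (n:ℝ) := by exact_mod_cast hn1
      positivity
    linarith

/-- `denomL ≤ denomH` -/
lemma denomL_le_denomH : ∀ i, ∀ k : ℕ, hyperE i ≤ (k:ℝ) →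
    denomL (i+1) (k:ℝ) ≤ ((denomH i k : ℚ) : ℝ) := by
  intro i
  induction i with
  | zero =>
    intro k _
    rw [denomL_one, denomH_zero]
    push_cast
    exact le_refl _
  | succ i ih =>
    intro k hk
    have hk' : hyperE i ≤ (k:ℝ) := le_trans (hyperE_le_succ i) hk
    have hk1 : 1 ≤ k := by
      have h1 : (1:ℝ) ≤ (k:ℝ) := le_trans (one_le_hyperE (i+1)) hk
      exact_mod_cast h1
    rw [denomL_succ, show ((denomH (i+1) k : ℚ) : ℝ) = ((denomH i k : ℚ):ℝ) * ((hIter (i+1) k : ℚ):ℝ) by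
      rw [denomH_succ]; push_cast; ring]
    apply mul_le_mul (ih k hk')
    · have := hIter_ge_lnIter i k hk'
      linarith
    · exact le_of_lt (lnIter_pos (le_refl (i+1)) hk)
    · have := denomH_pos i k hk1
      exact_mod_cast this.le

/-- upper bound: `h_{i+1}(n) ≤ ln_{i+1}(n) + C` for large `n`. -/
lemma hIter_le_lnIter (i : ℕ) : ∃ C : ℝ, 0 ≤ C ∧ ∃ N : ℕ,
    hyperE (i+1) + 1 ≤ (N:ℝ) ∧ ∀ n : ℕ, N ≤ n →
      (hIter (i+1) n : ℝ) ≤ lnIter (i+1) (n:ℝ) + C := by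
  set N : ℕ := ⌈hyperE (i+1)⌉₊ + 1 with hN
  have hNR : hyperE (i+1) + 1 ≤ (N:ℝ) := by
    have := Nat.le_ceil (hyperE (i+1))
    push_cast [hN]
    linarith
  refine ⟨max 0 ((hIter (i+1) N : ℝ) - lnIter (i+1) (N:ℝ)), le_max_left _ _, N, hNR, ?_⟩
  intro n hn
  induction n with
  | zero => omega
  | succ m ihm =>
    rcases Nat.lt_or_ge m N with hm | hm
    · have hEq : m + 1 = N := by omega
      rw [hEq]
      have := le_max_right 0 ((hIter (i+1) N : ℝ) - lnIter (i+1) ((N:ℕ):ℝ))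
      linarith
    · have ih2 := ihm (by omega)
      have hmR : hyperE (i+1) + 1 ≤ (m:ℝ) := le_trans hNR (by exact_mod_cast hm)
      have hmR' : hyperE i < (m:ℝ) := by
        have h1 := hyperE_le_succ i
        have h2 := hyperE_pos (i+1)
        linarith
      have hincr := (lnIter_incr hmR').1
      have hk' : hyperE i ≤ ((m+1:ℕ):ℝ) := by push_cast; linarith
      have hcomp := denomL_le_denomH i (m+1) hk'
      have hDpos : 0 < denomL (i+1) ((m:ℝ)+1) := by
        have : hyperE i ≤ (m:ℝ)+1 := by linarith
        exact denomL_pos (le_refl i) this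
      have hsum : (hIter (i+1) (m+1) : ℝ) = (hIter (i+1) m : ℝ) + ((1 / denomH i (m+1) : ℚ) : ℝ) := by
        rw [hIter_succ_n]; push_cast; ring
      have hdle : ((1 / denomH i (m+1) : ℚ) : ℝ) ≤ 1 / denomL (i+1) ((m:ℝ)+1) := by
        have hHpos : (0:ℝ) < ((denomH i (m+1) : ℚ) : ℝ) := by
          exact_mod_cast denomH_pos i (m+1) (by omega)
        rw [show ((1 / denomH i (m+1) : ℚ) : ℝ) = 1 / ((denomH i (m+1) : ℚ) : ℝ) by push_cast; ring]
        apply one_div_le_one_div_of_le hDpos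
        have : ((m+1:ℕ):ℝ) = (m:ℝ)+1 := by push_cast; ring
        rw [← this]
        exact hcomp
      have hcast : ((m+1:ℕ):ℝ) = (m:ℝ)+1 := by push_cast; ring
      rw [hsum, hcast]
      have : lnIter (i+1) ((m:ℝ)+1) - lnIter (i+1) (m:ℝ) ≥ 1 / denomL (i+1) ((m:ℝ)+1) := hincr
      linarith

end IHaux

namespace IHaux

/-- upper comparison of denominators -/
lemma denomH_le_denomL : ∀ i, ∃ C : ℝ, 1 ≤ C ∧ ∃ N : ℕ, hyperE i + 1 ≤ (N:ℝ) ∧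
    ∀ k : ℕ, N ≤ k →
      ((denomH i k : ℚ) : ℝ) ≤ denomL (i+1) (k:ℝ) * (1 + C / lnIter i (k:ℝ)) := by
  intro i
  induction i with
  | zero =>
    refine ⟨1, le_refl 1, 2, by norm_num [hyperE], ?_⟩
    intro k hk
    have hk0 : (0:ℝ) < (k:ℝ) := by exact_mod_cast Nat.lt_of_lt_of_le (by norm_num) hk
    rw [denomH_zero, denomL_one, lnIter_zero]
    push_cast
    have e : (k:ℝ) * (1/(k:ℝ)) = 1 := by field_simp
    rw [mul_add, mul_one, e]
    linarith
  | succ i ih =>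
    obtain ⟨C, hC, N, hNR, hbd⟩ := ih
    obtain ⟨C₂, hC₂, N₂, hN₂R, hbd₂⟩ := hIter_le_lnIter i
    refine ⟨C + C₂ + C*C₂ + 1, by nlinarith, max (max N N₂) (⌈hyperE (i+1)⌉₊ + 1), ?_, ?_⟩
    · have h1 := Nat.le_ceil (hyperE (i+1))
      calc hyperE (i+1) + 1 ≤ ((⌈hyperE (i+1)⌉₊ + 1 : ℕ) : ℝ) := by push_cast; linarith
      _ ≤ ((max (max N N₂) (⌈hyperE (i+1)⌉₊ + 1) : ℕ) : ℝ) := by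
          exact_mod_cast le_max_right _ _
    · intro k hk
      have hkN : N ≤ k := le_trans (le_trans (le_max_left _ _) (le_max_left _ _)) hk
      have hkN₂ : N₂ ≤ k := le_trans (le_trans (le_max_right _ _) (le_max_left _ _)) hk
      have hkE : hyperE (i+1) ≤ (k:ℝ) := by
        have h1 := Nat.le_ceil (hyperE (i+1))
        have h2 : ((⌈hyperE (i+1)⌉₊ + 1 : ℕ) : ℝ) ≤ (k:ℝ) := by
          exact_mod_cast le_trans (le_max_right _ _) hk
        push_cast at h2
        linarith
      have hkE' : hyperE i ≤ (k:ℝ) := le_trans (hyperE_le_succ i) hkE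
      set Li : ℝ := lnIter i (k:ℝ) with hLi
      set Li1 : ℝ := lnIter (i+1) (k:ℝ) with hLi1
      have h1Li1 : 1 ≤ Li1 := one_le_lnIter (le_refl (i+1)) hkE
      have hLe : Li1 ≤ Li := lnIter_anti (Nat.le_succ i) (le_refl (i+1)) hkE
      have h1Li : 1 ≤ Li := le_trans h1Li1 hLe
      have hLi0 : (0:ℝ) < Li := by linarith
      have hLi10 : (0:ℝ) < Li1 := by linarith
      set D : ℝ := denomL (i+1) (k:ℝ) with hD
      have hD0 : (0:ℝ) < D := denomL_pos (le_refl i) hkE'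
      have hIk : ((hIter (i+1) k : ℚ) : ℝ) ≤ Li1 + C₂ := hbd₂ k hkN₂
      have hIk0 : (0:ℝ) ≤ ((hIter (i+1) k : ℚ) : ℝ) := by
        have hk1 : 1 ≤ k := by
          have : (1:ℝ) ≤ (k:ℝ) := le_trans (one_le_hyperE (i+1)) hkE
          exact_mod_cast this
        have := hIter_pos i k hk1
        exact_mod_cast this.le
      have step1 : ((denomH (i+1) k : ℚ) : ℝ) ≤ (D * (1 + C / Li)) * (Li1 + C₂) := by
        rw [show ((denomH (i+1) k : ℚ) : ℝ) = ((denomH i k : ℚ):ℝ) * ((hIter (i+1) k : ℚ):ℝ) by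
          rw [denomH_succ]; push_cast; ring]
        apply mul_le_mul (hbd k hkN) hIk hIk0
        have : (0:ℝ) < 1 + C / Li := by positivity
        positivity
      have step2 : (1 + C / Li) * (Li1 + C₂) ≤ Li1 * (1 + (C + C₂ + C*C₂ + 1) / Li1) := by
        have e1 : (1 + C / Li) * (Li1 + C₂) = Li1 + C₂ + (C*Li1)/Li + (C*C₂)/Li := by
          field_simp; ring
        have e2 : Li1 * (1 + (C + C₂ + C*C₂ + 1) / Li1) = Li1 + (C + C₂ + C*C₂ + 1) := by
          field_simp
        have h2 : (C*Li1)/Li ≤ C := by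
          rw [div_le_iff₀ hLi0]; nlinarith
        have h3 : (C*C₂)/Li ≤ C*C₂ := div_le_self (by positivity) h1Li
        rw [e1, e2]
        linarith
      calc ((denomH (i+1) k : ℚ) : ℝ) ≤ (D * (1 + C / Li)) * (Li1 + C₂) := step1
      _ = D * ((1 + C / Li) * (Li1 + C₂)) := by ring
      _ ≤ D * (Li1 * (1 + (C + C₂ + C*C₂ + 1) / Li1)) :=
          mul_le_mul_of_nonneg_left step2 (le_of_lt hD0)
      _ = denomL (i+2) (k:ℝ) * (1 + (C + C₂ + C*C₂ + 1) / Li1) := by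
          rw [denomL_succ, hD, hLi1]; ring

end IHaux

namespace IHaux

lemma sum_le_tele (g u : ℕ → ℝ) (a : ℕ) (ha : 1 ≤ a)
    (h : ∀ k, a ≤ k → u k ≤ g (k-1) - g k) :
    ∀ b, a ≤ b → ∑ k ∈ Finset.Icc a b, u k ≤ g (a-1) - g b := by
  intro b
  induction b with
  | zero => omega
  | succ m ih =>
    intro hab
    rcases Nat.lt_or_ge m a with hm | hm
    · have : a = m + 1 := by omega
      subst this
      rw [Finset.Icc_self, Finset.sum_singleton]
      exact h (m+1) (le_refl _)
    · rw [← Finset.Ico_add_one_right_eq_Icc, Finset.sum_Ico_succ_top (by omega), Finset.Ico_add_one_right_eq_Icc]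
      have h2 := h (m+1) (by omega)
      have h3 : (m+1) - 1 = m := by omega
      rw [h3] at h2
      linarith [ih hm]

lemma tele_le_sum (g u : ℕ → ℝ) (a : ℕ)
    (h : ∀ k, a ≤ k → g k - g (k+1) ≤ u k) :
    ∀ b, a ≤ b → g a - g (b+1) ≤ ∑ k ∈ Finset.Icc a b, u k := by
  intro b
  induction b with
  | zero =>
    intro hab
    have : a = 0 := by omega
    subst this
    rw [Finset.Icc_self, Finset.sum_singleton]
    exact h 0 (le_refl _)
  | succ m ih =>
    intro hab
    rcases Nat.lt_or_ge m a with hm | hm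
    · have : a = m + 1 := by omega
      subst this
      rw [Finset.Icc_self, Finset.sum_singleton]
      exact h (m+1) (le_refl _)
    · rw [← Finset.Ico_add_one_right_eq_Icc, Finset.sum_Ico_succ_top (by omega), Finset.Ico_add_one_right_eq_Icc]
      have h2 := h (m+1) (by omega)
      linarith [ih hm]

lemma one_le_lowerA (j : ℕ) : 1 ≤ lowerA j := by
  unfold lowerA
  split
  · omega
  · have h1 := one_le_hyperE (j-2)
    have := Nat.one_le_ceil_iff.mpr (lt_of_lt_of_le zero_lt_one h1)
    omega

lemma hIter_cast (i n : ℕ) :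
    (hIter (i+1) n : ℝ) = ∑ k ∈ Finset.Icc 1 n, 1/((denomH i k : ℚ) : ℝ) := by
  rw [hIter_succ_def]
  push_cast
  rfl

end IHaux

namespace IHaux

lemma main (i : ℕ) :
    ∃ γ' : ℝ,
      Tendsto (fun n : ℕ => (hIter (i+2) n : ℝ) - lSum (i+2) n) atTop (nhds γ') ∧
      (∃ a b : ℝ, 0 < a ∧ a < b ∧
        ∀ᶠ n : ℕ in atTop,
          a / lnIter (i+1) (n : ℝ) ≤ |(hIter (i+2) n : ℝ) - lSum (i+2) n - γ'| ∧
          |(hIter (i+2) n : ℝ) - lSum (i+2) n - γ'| ≤ b / lnIter (i+1) (n : ℝ)) ∧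
      Tendsto (fun n : ℕ => (hIter (i+2) n : ℝ)) atTop atTop ∧
      Tendsto (fun n : ℕ => (hIter (i+2) n : ℝ) / lnIter (i+2) (n : ℝ)) atTop (nhds 1) := by
  obtain ⟨C', hC'1, N', hN'R, hbdQ⟩ := denomH_le_denomL (i+1)
  obtain ⟨NL, hNL⟩ := Filter.eventually_atTop.mp
    ((tendsto_lnIter_nat_atTop (i+1)).eventually_ge_atTop C')
  set N : ℕ := max (max N' NL) (max (lowerA (i+2)) (⌈hyperE (i+2)⌉₊ + 2)) with hNdef
  have hNE : hyperE (i+2) + 2 ≤ (N:ℝ) := by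
    have h1 := Nat.le_ceil (hyperE (i+2))
    calc hyperE (i+2) + 2 ≤ ((⌈hyperE (i+2)⌉₊ + 2 : ℕ) : ℝ) := by push_cast; linarith
    _ ≤ (N:ℝ) := by
        exact_mod_cast le_trans (le_max_right _ _) (le_max_right _ _ : max _ _ ≤ N)
  have hN1 : 1 ≤ N := by
    have : (1:ℝ) ≤ (N:ℝ) := by
      have := one_le_hyperE (i+2); linarith
    exact_mod_cast this
  have hNA : lowerA (i+2) ≤ N := le_trans (le_max_left _ _) (le_max_right _ _)
  set L : ℕ → ℝ := fun k => lnIter (i+1) (k:ℝ) with hLdef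
  set D : ℕ → ℝ := fun k => denomL (i+2) (k:ℝ) with hDdef
  set Q : ℕ → ℝ := fun k => ((denomH (i+1) k : ℚ) : ℝ) with hQdef
  set t : ℕ → ℝ := fun k => 1/(D k) - 1/(Q k) with htdef
  set u : ℕ → ℝ := fun k => 1/(D k * L k) with hudef
  set g : ℕ → ℝ := fun k => (L k)⁻¹ with hgdef
  -- per-k facts
  have hkE2 : ∀ k, N ≤ k → hyperE (i+2) + 2 ≤ (k:ℝ) := by
    intro k hk
    exact le_trans hNE (by exact_mod_cast hk)
  have hkE1 : ∀ k, N ≤ k → hyperE (i+1) ≤ (k:ℝ) := by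
    intro k hk
    have := hkE2 k hk
    have h2 := hyperE_add_one_le_succ (i+1)
    linarith
  have hkEi : ∀ k, N ≤ k → hyperE i ≤ (k:ℝ) := by
    intro k hk
    exact le_trans (hyperE_le_succ i) (hkE1 k hk)
  have hk1 : ∀ k, N ≤ k → 1 ≤ k := fun k hk => le_trans hN1 hk
  have hLb : ∀ k, N ≤ k → 1 ≤ L k := fun k hk => one_le_lnIter (le_refl (i+1)) (hkE1 k hk)
  have hLpos : ∀ k, N ≤ k → 0 < L k := fun k hk => lt_of_lt_of_le one_pos (hLb k hk)
  have hLC' : ∀ k, N ≤ k → C' ≤ L k := fun k hk =>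
    hNL k (le_trans (le_trans (le_max_right _ _) (le_max_left _ _)) hk)
  have hDpos : ∀ k, N ≤ k → 0 < D k := fun k hk => denomL_pos (le_refl (i+1)) (hkE1 k hk)
  have hQpos : ∀ k, N ≤ k → 0 < Q k := by
    intro k hk
    have h0 := denomH_pos (i+1) k (hk1 k hk)
    show (0:ℝ) < ((denomH (i+1) k : ℚ):ℝ)
    exact_mod_cast h0
  have hDQ : ∀ k, N ≤ k → D k ≤ Q k := fun k hk => denomL_le_denomH (i+1) k (hkE1 k hk)
  have hQup : ∀ k, N ≤ k → Q k ≤ D k * (1 + C' / L k) := fun k hk =>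
    hbdQ k (le_trans (le_trans (le_max_left _ _) (le_max_left _ _)) hk)
  have hC'L : ∀ k, N ≤ k → C' / L k ≤ 1 :=
    fun k hk => (div_le_one (hLpos k hk)).mpr (hLC' k hk)
  have hQ2D : ∀ k, N ≤ k → Q k ≤ 2 * D k := by
    intro k hk
    calc Q k ≤ D k * (1 + C' / L k) := hQup k hk
    _ ≤ D k * 2 := by
        apply mul_le_mul_of_nonneg_left _ (le_of_lt (hDpos k hk))
        linarith [hC'L k hk]
    _ = 2 * D k := by ring
  have hQlow : ∀ k, N ≤ k → D k * (1 + 1/(4 * L k)) ≤ Q k := by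
    intro k hk
    have e1 : denomL (i+1) (k:ℝ) ≤ ((denomH i k : ℚ):ℝ) := denomL_le_denomH i k (hkEi k hk)
    have e2 : L k + 1/4 ≤ ((hIter (i+1) k : ℚ):ℝ) := hIter_ge_lnIter i k (hkEi k hk)
    have e3 : Q k = ((denomH i k : ℚ):ℝ) * ((hIter (i+1) k : ℚ):ℝ) := by
      show ((denomH (i+1) k : ℚ):ℝ) = _
      rw [denomH_succ]; push_cast; ring
    have e4 : denomL (i+1) (k:ℝ) * (L k + 1/4) ≤ Q k := by
      rw [e3]
      apply mul_le_mul e1 e2 (by linarith [hLpos k hk]) _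
      have := denomH_pos i k (hk1 k hk)
      exact_mod_cast this.le
    have e5 : D k * (1 + 1/(4 * L k)) = denomL (i+1) (k:ℝ) * (L k + 1/4) := by
      rw [hDdef]
      show denomL (i+2) (k:ℝ) * _ = _
      rw [denomL_succ]
      have hL0 : L k ≠ 0 := ne_of_gt (hLpos k hk)
      rw [hLdef] at hL0 ⊢
      field_simp
    rw [e5]
    exact e4
  have hupos : ∀ k, N ≤ k → 0 < u k := by
    intro k hk
    rw [hudef]
    have := hDpos k hk; have := hLpos k hk
    positivity
  have ht_low : ∀ k, N ≤ k → u k / 8 ≤ t k := by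
    intro k hk
    have hD0 := hDpos k hk; have hQ0 := hQpos k hk; have hL0 := hLpos k hk
    have e : t k = (Q k - D k)/(D k * Q k) := by
      rw [htdef]
      field_simp
    rw [e]
    have h1 : D k / (4 * L k) ≤ Q k - D k := by
      have := hQlow k hk
      have e2 : D k * (1 + 1/(4 * L k)) = D k + D k / (4 * L k) := by
        field_simp
      linarith [e2 ▸ this]
    have h2 : D k * Q k ≤ D k * (2 * D k) := by
      apply mul_le_mul_of_nonneg_left (hQ2D k hk) (le_of_lt hD0)
    have h3 : (D k / (4 * L k)) / (D k * (2 * D k)) ≤ (Q k - D k)/(D k * Q k) := by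
      apply div_le_div₀ (by linarith [h1, div_pos hD0 (by linarith : (0:ℝ) < 4 * L k)]) h1
        (by positivity) h2
    have e6 : (D k / (4 * L k)) / (D k * (2 * D k)) = u k / 8 := by
      rw [hudef]
      field_simp
      ring
    linarith [e6 ▸ h3]
  have ht_up : ∀ k, N ≤ k → t k ≤ C' * u k := by
    intro k hk
    have hD0 := hDpos k hk; have hQ0 := hQpos k hk; have hL0 := hLpos k hk
    have e : t k = (Q k - D k)/(D k * Q k) := by
      rw [htdef]; field_simp
    rw [e]
    have h1 : Q k - D k ≤ D k * C' / L k := by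
      have := hQup k hk
      have e2 : D k * (1 + C' / L k) = D k + D k * C' / L k := by
        field_simp
      linarith [e2 ▸ this]
    have h2 : D k * D k ≤ D k * Q k := mul_le_mul_of_nonneg_left (hDQ k hk) (le_of_lt hD0)
    have h3 : (Q k - D k)/(D k * Q k) ≤ (D k * C' / L k) / (D k * D k) :=
      div_le_div₀ (by positivity) h1 (by positivity) h2
    have e6 : (D k * C' / L k) / (D k * D k) = C' * u k := by
      rw [hudef]; field_simp
    linarith [e6 ▸ h3]
  have ht_nonneg : ∀ k, N ≤ k → 0 ≤ t k := by
    intro k hk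
    have w1 := ht_low k hk
    have w2 := hupos k hk
    have w3 : (0:ℝ) ≤ u k / 8 := by linarith
    exact le_trans w3 w1

  -- increment bounds via MVT
  have hgpos : ∀ n : ℕ, hyperE (i+1) ≤ (n:ℝ) → 0 < g n := by
    intro n hn
    rw [hgdef]
    exact inv_pos.mpr (lnIter_pos (le_refl (i+1)) hn)
  have hNm1 : hyperE (i+1) ≤ ((N-1:ℕ):ℝ) := by
    rw [Nat.cast_sub hN1, Nat.cast_one]
    have h2 := hyperE_add_one_le_succ (i+1)
    linarith
  have hu_le : ∀ k, N ≤ k → u k ≤ g (k-1) - g k := by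
    intro k hk
    have hx : hyperE (i+1) < (k:ℝ) - 1 := by
      have := hkE2 k hk
      have h2 := hyperE_add_one_le_succ (i+1)
      linarith
    have h := (inv_lnIter_incr (i := i) (x := (k:ℝ)-1) hx).1
    have e : (k:ℝ)-1+1 = (k:ℝ) := by ring
    rw [e] at h
    have ec : ((k-1:ℕ):ℝ) = (k:ℝ)-1 := by
      rw [Nat.cast_sub (hk1 k hk), Nat.cast_one]
    show 1/(denomL (i+2) (k:ℝ) * lnIter (i+1) (k:ℝ)) ≤
      (lnIter (i+1) (((k-1:ℕ)):ℝ))⁻¹ - (lnIter (i+1) (k:ℝ))⁻¹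
    rw [ec]
    exact h
  have hg_le_u : ∀ k, N ≤ k → g k - g (k+1) ≤ u k := by
    intro k hk
    have hx : hyperE (i+1) < (k:ℝ) := by
      have := hkE2 k hk
      have h2 := hyperE_add_one_le_succ (i+1)
      linarith
    have h := (inv_lnIter_incr (i := i) (x := (k:ℝ)) hx).2
    have ec : ((k+1:ℕ):ℝ) = (k:ℝ)+1 := by push_cast; ring
    show (lnIter (i+1) (k:ℝ))⁻¹ - (lnIter (i+1) ((k+1:ℕ):ℝ))⁻¹ ≤
      1/(denomL (i+2) (k:ℝ) * lnIter (i+1) (k:ℝ))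
    rw [ec]
    exact h
  have hg_half : ∀ k, N ≤ k → g k ≤ 2 * g (k+1) := by
    intro k hk
    have hx : hyperE (i+1) < (k:ℝ) := by
      have := hkE2 k hk
      have h2 := hyperE_add_one_le_succ (i+1)
      linarith
    have hx0 : hyperE i < (k:ℝ) := lt_of_le_of_lt (hyperE_le_succ i) hx
    have hincr := (lnIter_incr (i := i) (x := (k:ℝ)) hx0).2
    have hden : (k:ℝ) ≤ denomL (i+1) (k:ℝ) := x_le_denomL i (Nat.le_succ i) (hkE1 k hk)
    have hk1' : (1:ℝ) ≤ (k:ℝ) := by exact_mod_cast hk1 k hk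
    have hdpos : 0 < denomL (i+1) (k:ℝ) := by linarith
    have h1 : 1 / denomL (i+1) (k:ℝ) ≤ 1 := by
      rw [div_le_one hdpos]; linarith
    have hLk := hLb k hk
    have hLk1 : 0 < L (k+1) := hLpos (k+1) (by omega)
    have ec : ((k+1:ℕ):ℝ) = (k:ℝ)+1 := by push_cast; ring
    have h2 : L (k+1) ≤ 2 * L k := by
      show lnIter (i+1) ((k+1:ℕ):ℝ) ≤ 2 * lnIter (i+1) (k:ℝ)
      rw [ec]
      have hb : (1:ℝ) ≤ lnIter (i+1) (k:ℝ) := hLb k hk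
      linarith
    show (L k)⁻¹ ≤ 2 * (L (k+1))⁻¹
    have hLkpos : 0 < L k := hLpos k hk
    rw [inv_eq_one_div, inv_eq_one_div, mul_one_div, div_le_div_iff₀ hLkpos hLk1]
    linarith
  -- partial sums
  set S : ℕ → ℝ := fun n => ∑ k ∈ Finset.Icc N n, t k with hSdef
  have hSmono : Monotone S := by
    intro a b hab
    apply Finset.sum_le_sum_of_subset_of_nonneg (Finset.Icc_subset_Icc_right hab)
    intro k hkm _
    exact ht_nonneg k (Finset.mem_Icc.mp hkm).1
  have hsum_u_le : ∀ n, N ≤ n → ∑ k ∈ Finset.Icc N n, u k ≤ g (N-1) - g n :=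
    fun n hn => sum_le_tele g u N hN1 hu_le n hn
  have hgN1pos : 0 < g (N-1) := hgpos (N-1) hNm1
  have hSub : ∀ n, S n ≤ C' * g (N-1) := by
    intro n
    rcases Nat.lt_or_ge n N with h | h
    · have : Finset.Icc N n = ∅ := Finset.Icc_eq_empty (by omega)
      rw [hSdef]
      show (∑ k ∈ Finset.Icc N n, t k) ≤ _
      rw [this, Finset.sum_empty]
      positivity
    · have h1 : S n ≤ ∑ k ∈ Finset.Icc N n, C' * u k := by
        apply Finset.sum_le_sum
        intro k hkm
        exact ht_up k (Finset.mem_Icc.mp hkm).1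
      have h2 : ∑ k ∈ Finset.Icc N n, C' * u k = C' * ∑ k ∈ Finset.Icc N n, u k := by
        rw [Finset.mul_sum]
      have h3 : C' * ∑ k ∈ Finset.Icc N n, u k ≤ C' * (g (N-1) - g n) :=
        mul_le_mul_of_nonneg_left (hsum_u_le n h) (by linarith)
      have h4 : 0 < g n := hgpos n (hkE1 n h)
      nlinarith
  have hbdd : BddAbove (Set.range S) := by
    refine ⟨C' * g (N-1), ?_⟩
    rintro x ⟨n, rfl⟩
    exact hSub n
  have hT : Tendsto S atTop (nhds (⨆ n, S n)) := tendsto_atTop_ciSup hSmono hbdd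
  set T : ℝ := ⨆ n, S n with hTdef
  have hSsplit : ∀ n m : ℕ, N ≤ n → n ≤ m →
      S m = S n + ∑ k ∈ Finset.Icc (n+1) m, t k := by
    intro n m hn hnm
    show (∑ k ∈ Finset.Icc N m, t k) = (∑ k ∈ Finset.Icc N n, t k) + _
    rw [← Finset.Ico_add_one_right_eq_Icc N m, ← Finset.Ico_add_one_right_eq_Icc N n, ← Finset.Ico_add_one_right_eq_Icc (n+1) m]
    rw [← Finset.sum_Ico_consecutive _ (by omega : N ≤ n+1) (by omega : n+1 ≤ m+1)]
  have htail_up : ∀ n, N ≤ n → T ≤ S n + C' * g n := by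
    intro n hn
    have hgn : 0 < g n := hgpos n (hkE1 n hn)
    apply le_of_tendsto hT
    filter_upwards [eventually_ge_atTop n] with m hm
    rw [hSsplit n m hn hm]
    rcases Nat.lt_or_ge m (n+1) with h | h
    · have : Finset.Icc (n+1) m = ∅ := Finset.Icc_eq_empty (by omega)
      rw [this, Finset.sum_empty]
      nlinarith
    · have h1 : ∑ k ∈ Finset.Icc (n+1) m, t k ≤ ∑ k ∈ Finset.Icc (n+1) m, C' * u k := by
        apply Finset.sum_le_sum
        intro k hkm
        exact ht_up k (by have := (Finset.mem_Icc.mp hkm).1; omega)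
      have h2 : ∑ k ∈ Finset.Icc (n+1) m, C' * u k
          = C' * ∑ k ∈ Finset.Icc (n+1) m, u k := by rw [Finset.mul_sum]
      have h3 : ∑ k ∈ Finset.Icc (n+1) m, u k ≤ g ((n+1)-1) - g m := by
        apply sum_le_tele g u (n+1) (by omega) _ m h
        intro k hkk
        exact hu_le k (by omega)
      have h4 : (n+1) - 1 = n := by omega
      rw [h4] at h3
      have h5 : 0 < g m := hgpos m (hkE1 m (by omega))
      nlinarith
  have hg0 : Tendsto g atTop (nhds 0) := (tendsto_lnIter_nat_atTop (i+1)).inv_tendsto_atTop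
  have htail_low : ∀ n, N ≤ n → S n + (1/8) * g (n+1) ≤ T := by
    intro n hn
    have hlim2 : Tendsto (fun m : ℕ => g (m+1)) atTop (nhds 0) :=
      hg0.comp (tendsto_add_atTop_nat 1)
    have hflim : Tendsto (fun m : ℕ => S n + (1/8) * (g (n+1) - g (m+1))) atTop
        (nhds (S n + (1/8) * (g (n+1) - 0))) :=
      tendsto_const_nhds.add ((tendsto_const_nhds.sub hlim2).const_mul (1/8))
    rw [sub_zero] at hflim
    apply le_of_tendsto_of_tendsto hflim hT
    filter_upwards [eventually_ge_atTop (n+1)] with m hm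
    rw [hSsplit n m hn (by omega)]
    have h1 : ∑ k ∈ Finset.Icc (n+1) m, u k / 8 ≤ ∑ k ∈ Finset.Icc (n+1) m, t k := by
      apply Finset.sum_le_sum
      intro k hkm
      exact ht_low k (by have := (Finset.mem_Icc.mp hkm).1; omega)
    have h2 : g (n+1) - g (m+1) ≤ ∑ k ∈ Finset.Icc (n+1) m, u k := by
      apply tele_le_sum g u (n+1) _ m hm
      intro k hkk
      exact hg_le_u k (by omega)
    have h3 : ∑ k ∈ Finset.Icc (n+1) m, u k / 8
        = (∑ k ∈ Finset.Icc (n+1) m, u k) / 8 := by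
      rw [Finset.sum_div]
    show S n + (1/8) * (g (n+1) - g (m+1)) ≤ S n + ∑ k ∈ Finset.Icc (n+1) m, t k
    have h4 : (1/8) * (g (n+1) - g (m+1)) ≤ (∑ k ∈ Finset.Icc (n+1) m, u k) / 8 := by
      linarith
    linarith
  -- the constant
  set A : ℝ := ((hIter (i+2) (N-1) : ℚ) : ℝ) - lSum (i+2) (N-1) with hAdef
  have hFG : ∀ n, N ≤ n →
      ((hIter (i+2) n : ℚ) : ℝ) - lSum (i+2) n = A - S n := by
    intro n hn
    have hsplit : ∀ (f : ℕ → ℝ) (a : ℕ), a ≤ N → 1 ≤ a →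
        ∑ k ∈ Finset.Icc a n, f k
          = (∑ k ∈ Finset.Icc a (N-1), f k) + ∑ k ∈ Finset.Icc N n, f k := by
      intro f a haN ha1
      have e3 := Finset.sum_Ico_consecutive f (by omega : a ≤ N) (by omega : N ≤ n+1)
      have e1 : ∑ k ∈ Finset.Icc a n, f k = ∑ k ∈ Finset.Ico a (n+1), f k := by
        rw [Finset.Ico_add_one_right_eq_Icc]
      have e2 : ∑ k ∈ Finset.Icc a (N-1), f k = ∑ k ∈ Finset.Ico a N, f k := by
        rw [show N = (N-1)+1 by omega, Finset.Ico_add_one_right_eq_Icc]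
        rw [show N - 1 + 1 - 1 = N - 1 by omega]
      have e4 : ∑ k ∈ Finset.Icc N n, f k = ∑ k ∈ Finset.Ico N (n+1), f k := by
        rw [Finset.Ico_add_one_right_eq_Icc]
      rw [e1, e2, e4, e3]
    have hF : ((hIter (i+2) n : ℚ) : ℝ) = ((hIter (i+2) (N-1) : ℚ) : ℝ)
        + ∑ k ∈ Finset.Icc N n, 1/(Q k) := by
      rw [hIter_cast (i+1) n, hIter_cast (i+1) (N-1)]
      exact hsplit (fun k => 1/((denomH (i+1) k : ℚ):ℝ)) 1 hN1 (le_refl 1)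
    have hG : lSum (i+2) n = lSum (i+2) (N-1)
        + ∑ k ∈ Finset.Icc N n, 1/(D k) := by
      show (∑ k ∈ Finset.Icc (lowerA (i+2)) n, 1 / denomL (i+2) (k:ℝ))
        = (∑ k ∈ Finset.Icc (lowerA (i+2)) (N-1), 1 / denomL (i+2) (k:ℝ)) + _
      exact hsplit (fun k => 1/denomL (i+2) (k:ℝ)) (lowerA (i+2)) hNA (one_le_lowerA (i+2))
    have hS' : S n = (∑ k ∈ Finset.Icc N n, 1/(D k)) - ∑ k ∈ Finset.Icc N n, 1/(Q k) := by
      rw [hSdef]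
      show (∑ k ∈ Finset.Icc N n, (1/(D k) - 1/(Q k))) = _
      rw [Finset.sum_sub_distrib]
    rw [hF, hG, hAdef, hS']
    ring
  refine ⟨A - T, ?_, ?_, ?_, ?_⟩
  · -- convergence
    apply Tendsto.congr' _ (tendsto_const_nhds.sub hT)
    filter_upwards [eventually_ge_atTop N] with n hn
    exact (hFG n hn).symm
  · -- two-sided bounds
    refine ⟨1/16, C' + 1, by norm_num, by linarith, ?_⟩
    filter_upwards [eventually_ge_atTop N] with n hn
    have herr : ((hIter (i+2) n : ℚ) : ℝ) - lSum (i+2) n - (A - T) = T - S n := by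
      rw [hFG n hn]; ring
    have hlow := htail_low n hn
    have hup := htail_up n hn
    have hgn : 0 < g n := hgpos n (hkE1 n hn)
    have hhalf := hg_half n hn
    have hLn : 0 < L n := hLpos n hn
    have e1 : (1:ℝ)/16 / lnIter (i+1) (n:ℝ) = (1/16) * g n := by
      rw [hgdef]
      show _ = (1/16) * (lnIter (i+1) (n:ℝ))⁻¹
      rw [div_eq_mul_inv]
    have e2 : (C' + 1) / lnIter (i+1) (n:ℝ) = (C' + 1) * g n := by
      rw [hgdef]
      show _ = (C' + 1) * (lnIter (i+1) (n:ℝ))⁻¹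
      rw [div_eq_mul_inv]
    have hgn1 : 0 < g (n+1) := hgpos (n+1) (hkE1 (n+1) (Nat.le_succ_of_le hn))
    have hpos : 0 < T - S n := by linarith
    rw [herr, abs_of_pos hpos, e1, e2]
    constructor
    · linarith
    · linarith
  · -- hIter tends to infinity
    apply tendsto_atTop_mono' atTop _ (tendsto_lnIter_nat_atTop (i+2))
    filter_upwards [tendsto_natCast_atTop_atTop.eventually_ge_atTop (hyperE (i+1))] with n hn
    have := hIter_ge_lnIter (i+1) n hn
    linarith
  · -- ratio tends to 1
    obtain ⟨C₂, hC₂0, N₂, hN₂R, hbd₂⟩ := hIter_le_lnIter (i+1)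
    have hL2top := tendsto_lnIter_nat_atTop (i+2)
    have hupper : Tendsto (fun n : ℕ => 1 + C₂ * (lnIter (i+2) (n:ℝ))⁻¹) atTop (nhds (1 + C₂ * 0)) :=
      tendsto_const_nhds.add (hL2top.inv_tendsto_atTop.const_mul C₂)
    rw [show (1:ℝ) + C₂ * 0 = 1 by ring] at hupper
    apply tendsto_of_tendsto_of_tendsto_of_le_of_le' (tendsto_const_nhds (x := (1:ℝ))) hupper
    · filter_upwards [eventually_ge_atTop N₂,
        tendsto_natCast_atTop_atTop.eventually_ge_atTop (hyperE (i+1)),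
        hL2top.eventually_ge_atTop 1] with n hn1 hn2 hn3
      have hlo := hIter_ge_lnIter (i+1) n hn2
      have hL2pos : 0 < lnIter (i+2) (n:ℝ) := by linarith
      rw [le_div_iff₀ hL2pos, one_mul]
      linarith
    · filter_upwards [eventually_ge_atTop N₂,
        tendsto_natCast_atTop_atTop.eventually_ge_atTop (hyperE (i+1)),
        hL2top.eventually_ge_atTop 1] with n hn1 hn2 hn3
      have hhi := hbd₂ n hn1
      have hL2pos : 0 < lnIter (i+2) (n:ℝ) := by linarith
      rw [div_le_iff₀ hL2pos]
      have hne : lnIter (i+2) (n:ℝ) ≠ 0 := ne_of_gt hL2pos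
      have e : (1 + C₂ * (lnIter (i+2) (n:ℝ))⁻¹) * lnIter (i+2) (n:ℝ)
          = lnIter (i+2) (n:ℝ) + C₂ := by
        field_simp
      linarith [e]

end IHaux

/-- For each `j ≥ 2` there is a constant `γ′_j` such that
`h_j(n) − l_j(n) → γ′_j`, and there are `0 < a < b` with
`a/ln_{j−1}(n) ≤ |h_j(n) − l_j(n) − γ′_j| ≤ b/ln_{j−1}(n)` for all sufficiently large `n`;
consequently `h_j(n)` tends to `∞` at the same rate as the `j`-th iterated logarithm. -/
theorem iterated_harmonic_vs_lSum (j : ℕ) (hj : 2 ≤ j) :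
    ∃ γ' : ℝ,
      Tendsto (fun n : ℕ => (hIter j n : ℝ) - lSum j n) atTop (nhds γ') ∧
      (∃ a b : ℝ, 0 < a ∧ a < b ∧
        ∀ᶠ n : ℕ in atTop,
          a / lnIter (j - 1) (n : ℝ) ≤ |(hIter j n : ℝ) - lSum j n - γ'| ∧
          |(hIter j n : ℝ) - lSum j n - γ'| ≤ b / lnIter (j - 1) (n : ℝ)) ∧
      Tendsto (fun n : ℕ => (hIter j n : ℝ)) atTop atTop ∧
      Tendsto (fun n : ℕ => (hIter j n : ℝ) / lnIter j (n : ℝ)) atTop (nhds 1) := by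
  obtain ⟨i, rfl⟩ : ∃ i, j = i + 2 := ⟨j - 2, by omega⟩
  exact IHaux.main i
end

section
/- For each integer j ≥ 1, the sequence of j-th iterated harmonic numbers h_j(n) tends to infinity as n → ∞; equivalently, the infinite series ∑_{k=1}^{∞} 1/(k·h_1(k)·h_2(k)⋯h_{j−1}(k)) diverges. -/
open Filter Finset

/-! ### Auxiliary lemmas -/

lemma denomH_zero (j : ℕ) : denomH j 0 = 0 := by
  induction j with
  | zero => simp [denomH]
  | succ j ih => simp [denomH, ih]

lemma denomH_pos (j : ℕ) : ∀ k : ℕ, 1 ≤ k → 0 < denomH j k := by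
  induction j with
  | zero =>
      intro k hk
      simpa [denomH] using (by exact_mod_cast hk : (1:ℚ) ≤ k).trans_lt' one_pos
  | succ j ih =>
      intro k hk
      have hsum : 0 < ∑ m ∈ Finset.Icc 1 k, 1 / denomH j m := by
        apply Finset.sum_pos
        · intro m hm
          have := ih m (Finset.mem_Icc.mp hm).1
          positivity
        · exact ⟨1, Finset.mem_Icc.mpr ⟨le_refl 1, hk⟩⟩
      exact mul_pos (ih k hk) hsum

lemma denomH_nonneg (j k : ℕ) : 0 ≤ denomH j k := by
  rcases Nat.eq_zero_or_pos k with h | h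
  · simp [h, denomH_zero]
  · exact (denomH_pos j k h).le

/-- Abel–Dini: if partial sums of a nonnegative series diverge, then
`∑ aₖ / Sₖ` also diverges. -/
lemma abel_dini (a : ℕ → ℝ) (ha : ∀ k, 0 ≤ a k) (ha1 : 0 < a 1)
    (hS : Tendsto (fun n => ∑ k ∈ Finset.Icc 1 n, a k) atTop atTop) :
    Tendsto (fun n => ∑ k ∈ Finset.Icc 1 n, a k / (∑ m ∈ Finset.Icc 1 k, a m))
      atTop atTop := by
  set S : ℕ → ℝ := fun n => ∑ k ∈ Finset.Icc 1 n, a k with hSdef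
  set T : ℕ → ℝ := fun n => ∑ k ∈ Finset.Icc 1 n, a k / S k with hTdef
  have hSmono : Monotone S := fun n m hnm =>
    Finset.sum_le_sum_of_subset_of_nonneg (Finset.Icc_subset_Icc_right hnm)
      (fun i _ _ => ha i)
  have hterm : ∀ k, 0 ≤ a k / S k := by
    intro k
    apply div_nonneg (ha k)
    exact Finset.sum_nonneg fun i _ => ha i
  have hTmono : Monotone T := fun n m hnm =>
    Finset.sum_le_sum_of_subset_of_nonneg (Finset.Icc_subset_Icc_right hnm)
      (fun i _ _ => hterm i)
  have hS1 : 0 < S 1 := by simpa [hSdef] using ha1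
  have hSpos : ∀ n, 1 ≤ n → 0 < S n := fun n hn => hS1.trans_le (hSmono hn)
  -- key claim: for every r there is n ≥ 1 with r/2 ≤ T n
  have claim : ∀ r : ℕ, ∃ n : ℕ, 1 ≤ n ∧ (r : ℝ) / 2 ≤ T n := by
    intro r
    induction r with
    | zero =>
        refine ⟨1, le_refl 1, ?_⟩
        simpa [hTdef] using hterm 1
    | succ r ih =>
        obtain ⟨n, hn1, hTn⟩ := ih
        have hSn := hSpos n hn1
        obtain ⟨N, hN2, hNn⟩ :=
          ((hS.eventually_ge_atTop (2 * S n)).and (eventually_ge_atTop n)).exists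
        have hN1 : 1 ≤ N := hn1.trans hNn
        have hSN : 0 < S N := hSpos N hN1
        -- split T N = T n + ∑_{Ioc n N}
        have hicc : ∀ m : ℕ, Finset.Icc 1 m = Finset.Ioc 0 m := fun m =>
          Finset.Icc_add_one_left_eq_Ioc 0 m
        have hsplitT : T n + ∑ k ∈ Finset.Ioc n N, a k / S k = T N := by
          simp only [hTdef, hicc]
          exact Finset.sum_Ioc_consecutive _ (Nat.zero_le n) hNn
        have hsplitS : S n + ∑ k ∈ Finset.Ioc n N, a k = S N := by
          simp only [hSdef, hicc]
          exact Finset.sum_Ioc_consecutive _ (Nat.zero_le n) hNn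
        have hstep : ∑ k ∈ Finset.Ioc n N, a k / S N ≤ ∑ k ∈ Finset.Ioc n N, a k / S k := by
          apply Finset.sum_le_sum
          intro k hk
          have hk' := Finset.mem_Ioc.mp hk
          have hSk : 0 < S k := hSn.trans_le (hSmono hk'.1.le)
          exact div_le_div_of_nonneg_left (ha k) hSk (hSmono hk'.2)
        have heq : ∑ k ∈ Finset.Ioc n N, a k / S N = (S N - S n) / S N := by
          rw [← Finset.sum_div]
          congr 1
          linarith [hsplitS]
        have hhalf : (1:ℝ)/2 ≤ (S N - S n) / S N := by
          rw [le_div_iff₀ hSN]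
          linarith
        refine ⟨N, hN1, ?_⟩
        have : T n + 1/2 ≤ T N := by
          rw [← hsplitT]
          have := heq ▸ hstep
          linarith
        push_cast
        linarith
  apply tendsto_atTop_atTop_of_monotone hTmono
  intro b
  obtain ⟨r, hr⟩ := exists_nat_ge (2 * b)
  obtain ⟨n, _, hn⟩ := claim r
  exact ⟨n, by linarith⟩

lemma sum_Icc_one_eq_range (f : ℕ → ℝ) (hf0 : f 0 = 0) (n : ℕ) :
    ∑ k ∈ Finset.Icc 1 n, f k = ∑ k ∈ Finset.range (n + 1), f k := by
  induction n with
  | zero => simp [hf0]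
  | succ n ih =>
      rw [Finset.sum_Icc_succ_top (Nat.one_le_iff_ne_zero.mpr (Nat.succ_ne_zero n)) f,
        Finset.sum_range_succ, ih]

/-- The main divergence lemma, by induction on `j`. -/
lemma main_div (j : ℕ) :
    Tendsto (fun n => ∑ k ∈ Finset.Icc 1 n, (1:ℝ) / (denomH j k : ℝ)) atTop atTop := by
  induction j with
  | zero =>
      have hnon : ∀ n : ℕ, 0 ≤ (1:ℝ) / (n : ℝ) := fun n => by positivity
      have h1 : Tendsto (fun n : ℕ => ∑ i ∈ Finset.range n, (1:ℝ) / (i : ℝ)) atTop atTop :=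
        (not_summable_iff_tendsto_nat_atTop_of_nonneg hnon).mp Real.not_summable_one_div_natCast
      have h2 : Tendsto
          (fun n : ℕ => ∑ i ∈ Finset.range (n + 1), (1:ℝ) / (i : ℝ)) atTop atTop :=
        (tendsto_add_atTop_iff_nat 1).mpr h1
      refine h2.congr fun n => ?_
      rw [← sum_Icc_one_eq_range _ (by simp) n]
      simp [denomH]
  | succ j ih =>
      have key := abel_dini (fun k => (1:ℝ) / (denomH j k : ℝ))
        (fun k => by have := denomH_nonneg j k; positivity)
        (by have := denomH_pos j 1 le_rfl; positivity)
        ih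
      refine key.congr fun n => ?_
      apply Finset.sum_congr rfl
      intro k hk
      have hkpos := denomH_pos j k (Finset.mem_Icc.mp hk).1
      rw [div_div]
      congr 1
      symm
      show ((denomH (j+1) k : ℚ) : ℝ) = _
      rw [denomH]
      push_cast
      ring

/-- For each `j ≥ 1`, the `j`-th iterated harmonic numbers `h_j(n)` tend
to infinity; equivalently `∑_{k=1}^∞ 1/(k·h_1(k)⋯h_{j−1}(k))` diverges. -/
theorem iterated_harmonic_tendsto_atTop (j : ℕ) (hj : 1 ≤ j) :
    Tendsto (fun n : ℕ => (hIter j n : ℝ)) atTop atTop ∧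
    ¬ Summable (fun k : ℕ => (1 : ℝ) / (denomH (j - 1) k : ℝ)) := by
  have hmain := main_div (j - 1)
  have hcast : ∀ n : ℕ, (hIter j n : ℝ)
      = ∑ k ∈ Finset.Icc 1 n, (1:ℝ) / (denomH (j-1) k : ℝ) := by
    intro n
    rw [hIter]
    push_cast
    rfl
  have htendsto : Tendsto (fun n : ℕ => (hIter j n : ℝ)) atTop atTop :=
    hmain.congr fun n => (hcast n).symm
  refine ⟨htendsto, ?_⟩
  have hnon : ∀ k : ℕ, 0 ≤ (1:ℝ) / (denomH (j-1) k : ℝ) := fun k => by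
    have := denomH_nonneg (j-1) k; positivity
  rw [not_summable_iff_tendsto_nat_atTop_of_nonneg hnon]
  rw [← tendsto_add_atTop_iff_nat 1]
  refine hmain.congr fun n => ?_
  exact sum_Icc_one_eq_range _ (by simp [denomH_zero]) n
end

section
/- For every integer n ≥ 1, the 2-adic valuation of the harmonic number h_1(n) equals −⌊log₂ n⌋; that is, if r is the largest integer with 2^r ≤ n, then ν_2(h_1(n)) = −r. Equivalently, the 2-adic valuation of the denominator of h_1(n) in lowest terms is ⌊log₂ n⌋. -/
open Filter Finset

lemma hIter_one_eq_harmonic (n : ℕ) : hIter 1 n = harmonic n := by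
  rw [hIter, harmonic_eq_sum_Icc]
  exact Finset.sum_congr rfl fun k _ => by simp [denomH, one_div]

/-- For every `n ≥ 1`, `ν_2(h_1(n)) = −⌊log₂ n⌋`; equivalently the
`2`-adic valuation of the denominator of `h_1(n)` in lowest terms is `⌊log₂ n⌋`. -/
theorem harmonic_two_adic_valuation (n : ℕ) (hn : 1 ≤ n) :
    padicValRat 2 (hIter 1 n) = -(Nat.log 2 n : ℤ) ∧
    padicValNat 2 (hIter 1 n).den = Nat.log 2 n := by
  rw [hIter_one_eq_harmonic]
  refine ⟨padicValRat_two_harmonic n, ?_⟩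
  set q : ℚ := harmonic n with hq
  have hval : padicValRat 2 q = -(Nat.log 2 n : ℤ) := padicValRat_two_harmonic n
  rw [padicValRat_def] at hval
  -- coprimality: not both num and den divisible by 2
  have hcop : Nat.Coprime q.num.natAbs q.den := q.reduced
  have hnotboth : ¬ (0 < padicValInt 2 q.num ∧ 0 < padicValNat 2 q.den) := by
    rintro ⟨h1, h2⟩
    have hq0 : q ≠ 0 := (harmonic_pos (by omega)).ne'
    have hd1 : (2 : ℕ) ∣ q.num.natAbs := dvd_of_one_le_padicValNat h1
    have hd2 : (2 : ℕ) ∣ q.den := dvd_of_one_le_padicValNat h2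
    have := Nat.Coprime.eq_one_of_dvd (hcop.coprime_dvd_left hd1) hd2
    omega
  omega
end

section
/- The series ∑_{k=2}^{∞} (1/(k·ln k) − 1/(k·h_1(k))) converges, and there exist constants 0 < a < b such that for all sufficiently large n, a/ln n ≤ ∑_{k=n+1}^{∞} (1/(k·ln k) − 1/(k·h_1(k))) ≤ b/ln n. Consequently h_2(n) − l_2(n) converges to a constant γ′_2 as n → ∞, with error of order 1/ln n. -/
open Filter Finset

/-- The `k`-th term `1/(k·ln k) − 1/(k·h_1(k))` of the comparison series. -/
noncomputable def termDiff (k : ℕ) : ℝ :=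
  1 / ((k : ℝ) * Real.log k) - 1 / ((k : ℝ) * (hIter 1 k : ℝ))

-- auxiliary
lemma hIter_one (k : ℕ) : hIter 1 k = harmonic k := by
  simp [hIter, denomH, harmonic_eq_sum_Icc, one_div]

lemma termDiff_eq' (k : ℕ) :
    termDiff k = 1 / ((k : ℝ) * Real.log k) - 1 / ((k : ℝ) * (harmonic k : ℝ)) := by
  rw [termDiff, hIter_one]

lemma harmonic_lb {k : ℕ} (hk : 1 ≤ k) :
    Real.log k + (1 - Real.log 2) ≤ (harmonic k : ℝ) := by
  have h1 : ((harmonic 1 : ℚ) : ℝ) - Real.log ((1:ℕ) + 1) ≤ (harmonic k : ℝ) - Real.log (k + 1) := by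
    have := Real.strictMono_eulerMascheroniSeq.monotone hk
    simpa [Real.eulerMascheroniSeq] using this
  have h2 : ((harmonic 1 : ℚ) : ℝ) = 1 := by norm_num [harmonic_succ]
  have hlog : Real.log k ≤ Real.log (k + 1) := by
    apply Real.log_le_log (by positivity); linarith
  rw [h2] at h1
  norm_num at h1
  linarith

lemma c0_pos : (0:ℝ) < 1 - Real.log 2 := by
  have := Real.log_two_lt_d9
  linarith

noncomputable def dtel (k : ℕ) : ℝ := 1 / Real.log k - 1 / Real.log ((k : ℝ) + 1)

lemma log_pos_of_two_le {k : ℕ} (hk : 2 ≤ k) : 0 < Real.log k := by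
  apply Real.log_pos; exact_mod_cast by omega

lemma one_le_log {k : ℕ} (hk : 3 ≤ k) : 1 ≤ Real.log k := by
  rw [Real.le_log_iff_exp_le (by exact_mod_cast (by omega : 0 < k))]
  calc Real.exp 1 ≤ 2.7182818286 := Real.exp_one_lt_d9.le
    _ ≤ (3:ℝ) := by norm_num
    _ ≤ (k:ℝ) := by exact_mod_cast hk

lemma harmonic_pos_real {k : ℕ} (hk : 1 ≤ k) : 0 < ((harmonic k : ℚ) : ℝ) := by
  exact_mod_cast harmonic_pos (by omega)

lemma log_le_harmonic' {k : ℕ} (hk : 1 ≤ k) : Real.log k ≤ (harmonic k : ℝ) := by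
  calc Real.log k ≤ Real.log (k + 1) := by
        apply Real.log_le_log (by positivity); linarith
    _ ≤ (harmonic k : ℝ) := by exact_mod_cast log_add_one_le_harmonic k

lemma log_succ_le_two {k : ℕ} (hk : 2 ≤ k) :
    Real.log ((k : ℝ) + 1) ≤ 2 * Real.log k := by
  have h2 : (2:ℝ) ≤ (k:ℝ) := by exact_mod_cast hk
  calc Real.log ((k : ℝ) + 1) ≤ Real.log ((k:ℝ)^2) := by
        apply Real.log_le_log (by positivity); nlinarith
    _ = 2 * Real.log k := by
        rw [Real.log_pow]; norm_num

lemma log_le_log_succ (k : ℕ) : Real.log k ≤ Real.log ((k:ℝ) + 1) := by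
  rcases Nat.eq_zero_or_pos k with h | h
  · simp [h]
  · apply Real.log_le_log (by exact_mod_cast h); linarith

lemma log_diff_ub {k : ℕ} (hk : 1 ≤ k) :
    Real.log ((k:ℝ) + 1) - Real.log k ≤ 1 / k := by
  have hx : (0:ℝ) < k := by exact_mod_cast hk
  have := Real.log_le_sub_one_of_pos (show (0:ℝ) < ((k:ℝ)+1)/k by positivity)
  rw [Real.log_div (by positivity) (by positivity)] at this
  have : Real.log ((k:ℝ)+1) - Real.log k ≤ ((k:ℝ)+1)/k - 1 := this
  have he : ((k:ℝ)+1)/k - 1 = 1/k := by field_simp; ring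
  linarith

lemma log_diff_lb {k : ℕ} (hk : 1 ≤ k) :
    1 / ((k:ℝ) + 1) ≤ Real.log ((k:ℝ) + 1) - Real.log k := by
  have hx : (0:ℝ) < k := by exact_mod_cast hk
  have := Real.log_le_sub_one_of_pos (show (0:ℝ) < (k:ℝ)/((k:ℝ)+1) by positivity)
  rw [Real.log_div (by positivity) (by positivity)] at this
  have he : (k:ℝ)/((k:ℝ)+1) - 1 = -(1/((k:ℝ)+1)) := by field_simp; ring
  linarith

lemma termDiff_eq {k : ℕ} (hk : 2 ≤ k) :
    termDiff k = ((harmonic k : ℝ) - Real.log k) /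
      ((k:ℝ) * Real.log k * (harmonic k : ℝ)) := by
  have hx : (0:ℝ) < k := by exact_mod_cast (by omega : 0 < k)
  have hL := log_pos_of_two_le hk
  have hH := harmonic_pos_real (by omega : 1 ≤ k)
  rw [termDiff_eq']
  field_simp

lemma dtel_eq {k : ℕ} (hk : 2 ≤ k) :
    dtel k = (Real.log ((k:ℝ)+1) - Real.log k) /
      (Real.log k * Real.log ((k:ℝ)+1)) := by
  have hL := log_pos_of_two_le hk
  have hL' : 0 < Real.log ((k:ℝ)+1) := lt_of_lt_of_le hL (log_le_log_succ k)
  rw [dtel]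
  field_simp

lemma termDiff_nonneg {k : ℕ} (hk : 2 ≤ k) : 0 ≤ termDiff k := by
  have hx : (0:ℝ) < k := by exact_mod_cast (by omega : 0 < k)
  have hL := log_pos_of_two_le hk
  have hH := harmonic_pos_real (by omega : 1 ≤ k)
  have hLH := log_le_harmonic' (by omega : 1 ≤ k)
  rw [termDiff_eq']
  have : 1 / ((k:ℝ) * (harmonic k : ℝ)) ≤ 1 / ((k:ℝ) * Real.log k) := by
    apply one_div_le_one_div_of_le (by positivity)
    nlinarith
  linarith

lemma dtel_nonneg {k : ℕ} (hk : 2 ≤ k) : 0 ≤ dtel k := by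
  have hL := log_pos_of_two_le hk
  have hL' := log_le_log_succ k
  rw [dtel]
  have : 1 / Real.log ((k:ℝ)+1) ≤ 1 / Real.log k :=
    one_div_le_one_div_of_le hL hL'
  linarith

lemma arith_upper (x L L' H : ℝ) (hx : 3 ≤ x) (hL1 : 1 ≤ L) (hLL' : L ≤ L')
    (hL'2 : L' ≤ 2 * L) (hd : 1 / (x + 1) ≤ L' - L) (hHlb : L ≤ H) (hHub : H ≤ 1 + L) :
    (H - L) / (x * L * H) ≤ 4 * ((L' - L) / (L * L')) := by
  have hx0 : (0:ℝ) < x := by linarith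
  have hL : (0:ℝ) < L := by linarith
  have hL'0 : (0:ℝ) < L' := by linarith
  have hH0 : (0:ℝ) < H := by linarith
  have key : 1 ≤ 2 * x * (L' - L) := by
    have h1 : 1 / (2 * x) ≤ 1 / (x + 1) := by
      apply one_div_le_one_div_of_le (by positivity); linarith
    have h2 : 1 / (2 * x) ≤ L' - L := le_trans h1 hd
    calc (1:ℝ) = 2 * x * (1 / (2 * x)) := by field_simp
      _ ≤ 2 * x * (L' - L) := mul_le_mul_of_nonneg_left h2 (by positivity)
  have stepA : (H - L) / (x * L * H) ≤ 1 / (x * L^2) := by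
    rw [div_le_div_iff₀ (by positivity) (by positivity)]
    nlinarith [mul_le_mul_of_nonneg_right (show H - L ≤ 1 by linarith)
        (show (0:ℝ) ≤ x * L^2 by positivity),
      mul_le_mul_of_nonneg_left hHlb (show (0:ℝ) ≤ x * L by positivity)]
  have stepB : 1 / (x * L^2) ≤ 4 * ((L' - L) / (L * L')) := by
    rw [mul_div_assoc']
    rw [div_le_div_iff₀ (by positivity) (by positivity)]
    nlinarith [mul_le_mul_of_nonneg_left key (show (0:ℝ) ≤ 2 * L^2 by positivity),
      mul_le_mul_of_nonneg_left hL'2 (show (0:ℝ) ≤ L by positivity)]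
  linarith

lemma arith_lower (x L L' H c : ℝ) (hx : 3 ≤ x) (hL1 : 1 ≤ L) (hLL' : L ≤ L')
    (hd : L' - L ≤ 1 / x) (hHlb : L + c ≤ H) (hHub : H ≤ 1 + L)
    (hc0 : 0 < c) (hc1 : c ≤ 1) :
    (c / 2) * ((L' - L) / (L * L')) ≤ (H - L) / (x * L * H) := by
  have hx0 : (0:ℝ) < x := by linarith
  have hL : (0:ℝ) < L := by linarith
  have hL'0 : (0:ℝ) < L' := by linarith
  have hH0 : (0:ℝ) < H := by linarith
  have key2 : x * (L' - L) ≤ 1 := by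
    calc x * (L' - L) ≤ x * (1 / x) := mul_le_mul_of_nonneg_left hd (by positivity)
      _ = 1 := by field_simp
  have stepA : (c / 2) * ((L' - L) / (L * L')) ≤ (c / 2) * (1 / (x * L^2)) := by
    apply mul_le_mul_of_nonneg_left _ (by positivity)
    rw [div_le_div_iff₀ (by positivity) (by positivity)]
    nlinarith [mul_le_mul_of_nonneg_left key2 (show (0:ℝ) ≤ L^2 by positivity),
      mul_le_mul_of_nonneg_left hLL' (show (0:ℝ) ≤ L by positivity)]
  have stepB : (c / 2) * (1 / (x * L^2)) ≤ (H - L) / (x * L * H) := by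
    rw [mul_one_div, div_le_div_iff₀ (by positivity) (by positivity)]
    nlinarith [mul_le_mul_of_nonneg_left (show H ≤ 2 * L by linarith)
        (show (0:ℝ) ≤ c * x * L / 2 by positivity),
      mul_le_mul_of_nonneg_left (show c ≤ H - L by linarith)
        (show (0:ℝ) ≤ x * L^2 by positivity)]
  linarith

lemma termDiff_le_dtel {k : ℕ} (hk : 3 ≤ k) : termDiff k ≤ 4 * dtel k := by
  have hx : (3:ℝ) ≤ k := by exact_mod_cast hk
  rw [termDiff_eq (by omega), dtel_eq (by omega)]
  exact arith_upper _ _ _ _ hx (one_le_log hk) (log_le_log_succ k)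
    (log_succ_le_two (by omega)) (log_diff_lb (by omega))
    (log_le_harmonic' (by omega)) (harmonic_le_one_add_log k)

lemma dtel_le_termDiff {k : ℕ} (hk : 3 ≤ k) :
    ((1 - Real.log 2) / 2) * dtel k ≤ termDiff k := by
  have hx : (3:ℝ) ≤ k := by exact_mod_cast hk
  have hc1 : (1:ℝ) - Real.log 2 ≤ 1 := by
    have := Real.log_pos (by norm_num : (1:ℝ) < 2); linarith
  rw [termDiff_eq (by omega), dtel_eq (by omega)]
  exact arith_lower _ _ _ _ _ hx (one_le_log hk) (log_le_log_succ k)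
    (log_diff_ub (by omega)) (harmonic_lb (by omega)) (harmonic_le_one_add_log k)
    c0_pos hc1

lemma hasSum_dtel_shift {m : ℕ} (hm : 2 ≤ m) :
    HasSum (fun k : ℕ => dtel (k + m)) (1 / Real.log m) := by
  have hnn : ∀ k : ℕ, 0 ≤ dtel (k + m) := fun k => dtel_nonneg (by omega)
  rw [hasSum_iff_tendsto_nat_of_nonneg hnn]
  have hps : ∀ n : ℕ, ∑ i ∈ range n, dtel (i + m)
      = 1 / Real.log m - 1 / Real.log ((n + m : ℕ) : ℝ) := by
    intro n
    have h := Finset.sum_range_sub' (f := fun i => 1 / Real.log ((i + m : ℕ) : ℝ)) n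
    rw [show (0:ℕ) + m = m from by omega] at h
    rw [← h]
    apply Finset.sum_congr rfl
    intro i _
    rw [dtel]
    congr 2
    push_cast
    ring
  simp only [hps]
  have h1 : Tendsto (fun n : ℕ => Real.log ((n + m : ℕ) : ℝ)) atTop atTop := by
    apply Real.tendsto_log_atTop.comp
    have : Tendsto (fun n : ℕ => ((n + m : ℕ) : ℝ)) atTop atTop :=
      tendsto_natCast_atTop_atTop.comp (tendsto_add_atTop_nat m)
    exact this
  have h2 : Tendsto (fun n : ℕ => 1 / Real.log ((n + m : ℕ) : ℝ)) atTop (nhds 0) := by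
    simp only [one_div]
    exact h1.inv_tendsto_atTop
  have := (tendsto_const_nhds (x := 1 / Real.log (m:ℝ)) (f := atTop)).sub h2
  simpa using this

lemma tail_stuff {m : ℕ} (hm : 3 ≤ m) :
    Summable (fun k : ℕ => termDiff (k + m)) ∧
    ((1 - Real.log 2) / 2) * (1 / Real.log m) ≤ (∑' k : ℕ, termDiff (k + m)) ∧
    (∑' k : ℕ, termDiff (k + m)) ≤ 4 * (1 / Real.log m) := by
  have hd := hasSum_dtel_shift (show 2 ≤ m by omega)
  have le4 : ∀ k : ℕ, termDiff (k + m) ≤ 4 * dtel (k + m) :=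
    fun k => termDiff_le_dtel (by omega)
  have nn : ∀ k : ℕ, 0 ≤ termDiff (k + m) := fun k => termDiff_nonneg (by omega)
  have hs4 : HasSum (fun k : ℕ => 4 * dtel (k + m)) (4 * (1 / Real.log m)) :=
    hd.mul_left 4
  have hsum : Summable (fun k : ℕ => termDiff (k + m)) :=
    Summable.of_nonneg_of_le nn le4 hs4.summable
  refine ⟨hsum, ?_, ?_⟩
  · have hsc : HasSum (fun k : ℕ => ((1 - Real.log 2) / 2) * dtel (k + m))
        (((1 - Real.log 2) / 2) * (1 / Real.log m)) := hd.mul_left _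
    rw [← hsc.tsum_eq]
    exact Summable.tsum_le_tsum (fun k => dtel_le_termDiff (by omega)) hsc.summable hsum
  · rw [← hs4.tsum_eq]
    exact Summable.tsum_le_tsum le4 hsum hs4.summable

lemma hIter_two (n : ℕ) : hIter 2 n = ∑ k ∈ Finset.Icc 1 n, 1 / ((k:ℚ) * harmonic k) := by
  simp [hIter, denomH, harmonic_eq_sum_Icc, one_div]

lemma lSum_two (n : ℕ) : lSum 2 n = ∑ k ∈ Finset.Icc 2 n, 1 / ((k:ℝ) * Real.log k) := by
  simp [lSum, lowerA, denomL, lnIter]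

lemma key_identity {n : ℕ} (hn : 1 ≤ n) :
    ((hIter 2 n : ℚ) : ℝ) - lSum 2 n = 1 - ∑ i ∈ range (n - 1), termDiff (i + 2) := by
  have hcast : ((hIter 2 n : ℚ) : ℝ)
      = ∑ k ∈ Finset.Icc 1 n, 1 / ((k:ℝ) * ((harmonic k : ℚ) : ℝ)) := by
    rw [hIter_two]
    push_cast
    rfl
  have hins : Finset.Icc 1 n = insert 1 (Finset.Icc 2 n) := by
    ext x; simp [Finset.mem_Icc, Finset.mem_insert]; omega
  have h1n : (1:ℕ) ∉ Finset.Icc 2 n := by simp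
  rw [hcast, lSum_two, hins, Finset.sum_insert h1n]
  have hterm : ∑ k ∈ Finset.Icc 2 n, 1 / ((k:ℝ) * ((harmonic k : ℚ) : ℝ))
      - ∑ k ∈ Finset.Icc 2 n, 1 / ((k:ℝ) * Real.log k)
      = - ∑ k ∈ Finset.Icc 2 n, termDiff k := by
    rw [← Finset.sum_sub_distrib, ← Finset.sum_neg_distrib]
    apply Finset.sum_congr rfl
    intro k hk
    rw [termDiff_eq']
    ring
  have hrange : ∑ k ∈ Finset.Icc 2 n, termDiff k = ∑ i ∈ range (n - 1), termDiff (i + 2) := by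
    rw [← Finset.Ico_add_one_right_eq_Icc, Finset.sum_Ico_eq_sum_range]
    apply Finset.sum_congr (by congr 1 <;> omega)
    intro i _
    congr 1
    omega
  have h1 : 1 / ((1:ℝ) * ((harmonic 1 : ℚ) : ℝ)) = 1 := by
    norm_num [harmonic_succ]
  have := hterm
  push_cast at h1 ⊢
  rw [← hrange]
  linarith [hterm, h1]


/-- The series `∑_{k=2}^∞ (1/(k·ln k) − 1/(k·h_1(k)))` converges, and
there are `0 < a < b` such that for all sufficiently large `n` the tail
`∑_{k=n+1}^∞` lies between `a/ln n` and `b/ln n`. Consequently `h_2(n) − l_2(n)` converges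
to a constant `γ′_2`, with error of order `1/ln n`. -/
theorem h2_minus_l2_converges :
    Summable (fun k : ℕ => termDiff (k + 2)) ∧
    (∃ a b : ℝ, 0 < a ∧ a < b ∧
      ∀ᶠ n : ℕ in atTop,
        a / Real.log n ≤ (∑' k : ℕ, termDiff (k + n + 1)) ∧
        (∑' k : ℕ, termDiff (k + n + 1)) ≤ b / Real.log n) ∧
    (∃ γ : ℝ,
      Tendsto (fun n : ℕ => (hIter 2 n : ℝ) - lSum 2 n) atTop (nhds γ) ∧
      ∃ c : ℝ, 0 < c ∧ ∀ᶠ n : ℕ in atTop,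
        |(hIter 2 n : ℝ) - lSum 2 n - γ| ≤ c / Real.log n) := by
  have hc0 := c0_pos
  have hsummable : Summable (fun k : ℕ => termDiff (k + 2)) := by
    have h3 := (tail_stuff (le_refl 3)).1
    exact (summable_nat_add_iff 1).mp h3
  -- tail bounds for n ≥ 2, in terms of log n
  have tailbound : ∀ n : ℕ, 2 ≤ n →
      ((1 - Real.log 2) / 8) / Real.log n ≤ (∑' k : ℕ, termDiff (k + n + 1)) ∧
      (∑' k : ℕ, termDiff (k + n + 1)) ≤ 4 / Real.log n := by
    intro n hn
    obtain ⟨hsum, hlo, hhi⟩ := tail_stuff (show 3 ≤ n + 1 by omega)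
    have hLn : 0 < Real.log n := log_pos_of_two_le hn
    have hLn1 : 0 < Real.log ((n + 1 : ℕ) : ℝ) := log_pos_of_two_le (by omega)
    have hmono : Real.log (n : ℝ) ≤ Real.log ((n + 1 : ℕ) : ℝ) := by
      push_cast; exact log_le_log_succ n
    have h2 : Real.log ((n + 1 : ℕ) : ℝ) ≤ 2 * Real.log n := by
      push_cast; exact log_succ_le_two hn
    have heq : (fun k : ℕ => termDiff (k + (n + 1))) = fun k : ℕ => termDiff (k + n + 1) := by
      funext k; congr 1 <;> omega
    rw [heq] at hlo hhi
    constructor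
    · refine le_trans ?_ hlo
      rw [mul_one_div, div_le_div_iff₀ hLn hLn1]
      nlinarith
    · refine le_trans hhi ?_
      rw [mul_one_div, div_le_div_iff₀ hLn1 hLn]
      nlinarith
  refine ⟨hsummable, ⟨(1 - Real.log 2) / 8, 4, by linarith, ?_, ?_⟩, ?_⟩
  · have := Real.log_nonneg (by norm_num : (1:ℝ) ≤ 2)
    linarith
  · filter_upwards [eventually_ge_atTop 2] with n hn
    exact tailbound n hn
  · set f := fun k : ℕ => termDiff (k + 2) with hf
    set T := ∑' k : ℕ, f k with hT
    refine ⟨1 - T, ?_, 4, by norm_num, ?_⟩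
    · have hps : Tendsto (fun N : ℕ => ∑ i ∈ range N, f i) atTop (nhds T) :=
        hsummable.hasSum.tendsto_sum_nat
      have h1 : Tendsto (fun n : ℕ => 1 - ∑ i ∈ range (n - 1), f i) atTop (nhds (1 - T)) :=
        tendsto_const_nhds.sub (hps.comp (tendsto_sub_atTop_nat 1))
      apply h1.congr'
      filter_upwards [eventually_ge_atTop 1] with n hn
      exact (key_identity hn).symm
    · filter_upwards [eventually_ge_atTop 2] with n hn
      have hkey := key_identity (show 1 ≤ n by omega)
      have htsum := Summable.sum_add_tsum_nat_add (f := f) (n - 1) hsummable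
      have hshift : (fun k : ℕ => f (k + (n - 1))) = fun k : ℕ => termDiff (k + n + 1) := by
        funext k; simp only [hf]; congr 1; omega
      rw [hshift] at htsum
      have htail := tailbound n hn
      have hnn : 0 ≤ ∑' k : ℕ, termDiff (k + n + 1) := by
        have hLn : 0 < Real.log n := log_pos_of_two_le hn
        refine le_trans ?_ htail.1
        positivity
      rw [hkey]
      have : (1 : ℝ) - ∑ i ∈ range (n - 1), f i - (1 - T) = ∑' k : ℕ, termDiff (k + n + 1) := by
        rw [← hT] at htsum
        rw [← htsum]; ring
      rw [this, abs_of_nonneg hnn]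
      exact htail.2
end
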